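/- arXiv:1511.09329 — 4 statements merged into one kernel-verified Lean document; each statement's English description precedes it below -/
import Mathlib

section
/- Let C ⊆ F_{q^m}^n be an F_{q^m}-linear q^r-cyclic code with minimal generator G(x) of C(x), and let T = Z(G) ⊆ F_{q^{rn}} be its root space. Then G(x) equals the conventional product ∏_{β ∈ T} (x − β) over all elements β of T, and dim_{F_{q^m}}(C) = n − dim_{F_{q^r}}(T). -/
/-- `P` is a `q^r`-linearized polynomial over `F`: every exponent appearing in its
support is of the form `q ^ (r * j)`. -/
def IsLin (q r : ℕ) {F : Type*} [Field F] (P : Polynomial F) : Prop :=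
  ∀ i ∈ P.support, ∃ j : ℕ, i = q ^ (r * j)

/-- The `q^r`-linearized polynomial `∑ v i * X ^ (q ^ (r * i))` associated to a vector
`v ∈ F^n`; this is the unique representative of degree `< q^(r*n)` of a class of the
quotient ring `L` of `q^r`-polynomials modulo `X^(q^(r*n)) - X`, i.e. the map `γ_r`. -/
noncomputable def vecPoly (q r n : ℕ) {F : Type*} [Field F] (v : Fin n → F) : Polynomial F :=
  ∑ i : Fin n, Polynomial.C (v i) * Polynomial.X ^ q ^ (r * (i : ℕ))

/-- The classes of `P` and `Q` modulo `X^(q^(r*n)) - X` coincide (equality in `L`). -/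
def ClassEq (q r n : ℕ) {F : Type*} [Field F] (P Q : Polynomial F) : Prop :=
  (Polynomial.X ^ q ^ (r * n) - Polynomial.X : Polynomial F) ∣ (P - Q)

/-- The class of `P` in `L` lies in `C(x) = γ_r(C)`. -/
def MemCx (q r n : ℕ) {F : Type*} [Field F] (C : Set (Fin n → F)) (P : Polynomial F) : Prop :=
  ∃ v ∈ C, ClassEq q r n P (vecPoly q r n v)

/-- `G` is the minimal generator of `C(x)`: the monic `q^r`-polynomial of minimal degree
whose residue class modulo `X^(q^(r*n)) - X` lies in `C(x)`. -/
def IsMinGen (q r n : ℕ) {F : Type*} [Field F] (C : Set (Fin n → F)) (G : Polynomial F) : Prop :=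
  IsLin q r G ∧ G.Monic ∧ MemCx q r n C G ∧
    ∀ P : Polynomial F, IsLin q r P → P.Monic → MemCx q r n C P → G.natDegree ≤ P.natDegree

/-- A code `C ⊆ F^n` is `q^r`-cyclic if it is stable under the `q^r`-shift
`(c₀, …, c_{n-1}) ↦ (c_{n-1}^{q^r}, c₀^{q^r}, …, c_{n-2}^{q^r})`. -/
def IsQrCyclic (q r n : ℕ) [NeZero n] {F : Type*} [Field F] (C : Set (Fin n → F)) : Prop :=
  ∀ c ∈ C, (fun i : Fin n => c (i - 1) ^ q ^ r) ∈ C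

/-- `D` divides `P` symbolically on the right: `P = Q ⊗ D = Q ∘ D` for some
`q^r`-polynomial `Q`. -/
def SymDvdR (q r : ℕ) {F : Type*} [Field F] (D P : Polynomial F) : Prop :=
  ∃ Q : Polynomial F, IsLin q r Q ∧ P = Q.comp D

/-- The set of roots of `P` in the extension field `K` (the root space `Z(P)`). -/
def ZSet {F : Type*} (K : Type*) [Field F] [Field K] [Algebra F K] (P : Polynomial F) :
    Set K :=
  {β : K | Polynomial.aeval β P = 0}

/-- `P` is the minimal `q^r`-polynomial of `β` over `F`: the monic `q^r`-polynomial over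
`F` of minimal degree vanishing at `β`. -/
def IsMinQPoly (q r : ℕ) {F : Type*} {K : Type*} [Field F] [Field K] [Algebra F K]
    (β : K) (P : Polynomial F) : Prop :=
  IsLin q r P ∧ P.Monic ∧ Polynomial.aeval β P = 0 ∧
    ∀ Q : Polynomial F, IsLin q r Q → Q.Monic → Polynomial.aeval β Q = 0 →
      P.natDegree ≤ Q.natDegree

/-! ### Auxiliary lemmas on `q^r`-linearized polynomials -/

set_option linter.unusedSectionVars false
set_option linter.unusedVariables false
set_option linter.unnecessarySimpa false

open Polynomial Finset

section LinBasics

variable {F : Type*} [Field F] {q r : ℕ}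

theorem aux_isLin_iff {P : F[X]} :
    IsLin q r P ↔ ∀ i ∈ P.support, ∃ j : ℕ, i = (q ^ r) ^ j := by
  unfold IsLin; simp_rw [← pow_mul]

theorem aux_isLin_mono {P Q : F[X]} (h : P.support ⊆ Q.support) (hQ : IsLin q r Q) :
    IsLin q r P := fun i hi => hQ i (h hi)

theorem aux_isLin_zero : IsLin q r (0 : F[X]) := by simp [IsLin]

theorem aux_isLin_add {P Q : F[X]} (hP : IsLin q r P) (hQ : IsLin q r Q) :
    IsLin q r (P + Q) := by
  intro i hi
  rcases Finset.mem_union.1 (Polynomial.support_add hi) with h | h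
  exacts [hP i h, hQ i h]

theorem aux_isLin_neg {P : F[X]} (hP : IsLin q r P) : IsLin q r (-P) := by
  intro i hi; exact hP i (by simpa using hi)

theorem aux_isLin_sub {P Q : F[X]} (hP : IsLin q r P) (hQ : IsLin q r Q) :
    IsLin q r (P - Q) := by
  rw [sub_eq_add_neg]; exact aux_isLin_add hP (aux_isLin_neg hQ)

theorem aux_isLin_C_mul {P : F[X]} (c : F) (hP : IsLin q r P) : IsLin q r (C c * P) := by
  refine aux_isLin_mono ?_ hP
  rw [← smul_eq_C_mul]
  exact Polynomial.support_smul c P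

theorem aux_isLin_monomial (c : F) (j : ℕ) : IsLin q r (C c * X ^ (q ^ r) ^ j : F[X]) := by
  intro i hi
  have := Polynomial.support_C_mul_X_pow' ((q ^ r) ^ j) c hi
  simp only [Finset.mem_singleton] at this
  exact ⟨j, by rw [this, pow_mul]⟩

theorem aux_isLin_sum {ι : Type*} (s : Finset ι) (f : ι → F[X])
    (h : ∀ i ∈ s, IsLin q r (f i)) : IsLin q r (∑ i ∈ s, f i) := by
  classical
  induction s using Finset.induction_on with
  | empty => simpa using aux_isLin_zero
  | insert _ _ hx ih =>
    rw [Finset.sum_insert hx]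
    exact aux_isLin_add (h _ (Finset.mem_insert_self _ _))
      (ih fun i hi => h i (Finset.mem_insert_of_mem hi))

theorem aux_pow_inj (hq2 : 2 ≤ q ^ r) {i j : ℕ} (h : (q ^ r) ^ i = (q ^ r) ^ j) : i = j :=
  Nat.pow_right_injective hq2 h

theorem aux_coeff_linsum (hq2 : 2 ≤ q ^ r) (f : ℕ → F) (N i : ℕ) :
    (∑ j ∈ Finset.range N, C (f j) * X ^ (q ^ r) ^ j).coeff ((q ^ r) ^ i)
      = if i < N then f i else 0 := by
  rw [finset_sum_coeff]
  by_cases hi : i < N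
  · rw [Finset.sum_eq_single i]
    · simp [hi]
    · intro b _ hbi
      simp only [coeff_C_mul, coeff_X_pow]
      rw [if_neg (fun h => hbi (aux_pow_inj hq2 h.symm)), mul_zero]
    · intro h; exact absurd (Finset.mem_range.2 hi) h
  · rw [if_neg hi, Finset.sum_eq_zero]
    intro b hb
    simp only [coeff_C_mul, coeff_X_pow]
    rw [if_neg, mul_zero]
    intro h
    exact hi ((aux_pow_inj hq2 h) ▸ Finset.mem_range.1 hb)

theorem aux_coeff_linsum_ne (hq2 : 2 ≤ q ^ r) (f : ℕ → F) (N i : ℕ)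
    (hi : ∀ j : ℕ, i ≠ (q ^ r) ^ j) :
    (∑ j ∈ Finset.range N, C (f j) * X ^ (q ^ r) ^ j).coeff i = 0 := by
  rw [finset_sum_coeff, Finset.sum_eq_zero]
  intro b _
  simp only [coeff_C_mul, coeff_X_pow]
  rw [if_neg (fun h => hi b h), mul_zero]

theorem aux_natDegree_linsum_lt (hq2 : 2 ≤ q ^ r) (f : ℕ → F) (N : ℕ) :
    (∑ j ∈ Finset.range N, C (f j) * X ^ (q ^ r) ^ j).natDegree < (q ^ r) ^ N := by
  have h0 : 0 < (q ^ r) ^ N := Nat.pow_pos (by omega)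
  rcases Nat.eq_zero_or_pos N with rfl | hN
  · simpa using h0
  refine lt_of_le_of_lt (Polynomial.natDegree_sum_le_of_forall_le _ _ fun j hj => ?_)
    (show (q ^ r) ^ (N - 1) < (q ^ r) ^ N from
      Nat.pow_lt_pow_right (by omega) (by omega))
  calc (C (f j) * X ^ (q ^ r) ^ j).natDegree ≤ (q ^ r) ^ j := by
        simpa using (Polynomial.natDegree_C_mul_le (f j) (X ^ (q ^ r) ^ j)).trans
          (Polynomial.natDegree_X_pow_le _)
    _ ≤ (q ^ r) ^ (N - 1) :=
        Nat.pow_le_pow_right (by omega) (by have := Finset.mem_range.1 hj; omega)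

theorem aux_lin_rep (hq2 : 2 ≤ q ^ r) {P : F[X]}
    (hP : ∀ i ∈ P.support, ∃ j : ℕ, i = (q ^ r) ^ j) {N : ℕ}
    (hd : P.natDegree < (q ^ r) ^ N) :
    P = ∑ j ∈ Finset.range N, C (P.coeff ((q ^ r) ^ j)) * X ^ (q ^ r) ^ j := by
  ext i
  by_cases hi : ∃ j : ℕ, i = (q ^ r) ^ j
  · obtain ⟨j, rfl⟩ := hi
    rw [aux_coeff_linsum hq2]
    by_cases hj : j < N
    · rw [if_pos hj]
    · rw [if_neg hj, Polynomial.coeff_eq_zero_of_natDegree_lt]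
      calc P.natDegree < (q ^ r) ^ N := hd
        _ ≤ (q ^ r) ^ j := Nat.pow_le_pow_right (by omega) (by omega)
  · push_neg at hi
    rw [aux_coeff_linsum_ne hq2 _ _ _ hi]
    by_contra h
    obtain ⟨j, hj⟩ := hP i (Polynomial.mem_support_iff.2 h)
    exact hi j hj

theorem aux_pow_qr_eq {p u : ℕ} (hp : p.Prime) [CharP F p] (ht : q ^ r = p ^ u)
    (P : F[X]) : P ^ q ^ r = ∑ i ∈ P.support, C (P.coeff i ^ q ^ r) * X ^ (i * q ^ r) := by
  haveI : Fact p.Prime := ⟨hp⟩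
  conv_lhs => rw [P.as_sum_support_C_mul_X_pow]
  rw [ht, sum_pow_char_pow]
  exact Finset.sum_congr rfl fun i _ => by rw [mul_pow, ← C_pow, ← pow_mul, ← ht]

theorem aux_isLin_pow_qr {p u : ℕ} (hp : p.Prime) [CharP F p] (ht : q ^ r = p ^ u)
    {P : F[X]} (hP : IsLin q r P) : IsLin q r (P ^ q ^ r) := by
  rw [aux_pow_qr_eq hp ht]
  refine aux_isLin_sum _ _ fun i hi => ?_
  obtain ⟨j, rfl⟩ := (aux_isLin_iff.1 hP) i hi
  rw [show (q ^ r) ^ j * q ^ r = (q ^ r) ^ (j + 1) from (pow_succ _ j).symm]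
  exact aux_isLin_monomial _ _

theorem aux_isLin_pow_pow {p u : ℕ} (hp : p.Prime) [CharP F p] (ht : q ^ r = p ^ u)
    {P : F[X]} (hP : IsLin q r P) (j : ℕ) : IsLin q r (P ^ (q ^ r) ^ j) := by
  induction j with
  | zero => simpa using hP
  | succ j ih =>
    rw [pow_succ, pow_mul]
    exact aux_isLin_pow_qr hp ht ih

theorem aux_comp_eq_sum (A B : F[X]) :
    A.comp B = ∑ i ∈ A.support, C (A.coeff i) * B ^ i := by
  rw [comp_eq_sum_left, Polynomial.sum_def]

theorem aux_isLin_comp {p u : ℕ} (hp : p.Prime) [CharP F p] (ht : q ^ r = p ^ u)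
    {A B : F[X]} (hA : IsLin q r A) (hB : IsLin q r B) : IsLin q r (A.comp B) := by
  rw [aux_comp_eq_sum]
  refine aux_isLin_sum _ _ fun i hi => ?_
  obtain ⟨j, rfl⟩ := (aux_isLin_iff.1 hA) i hi
  intro i' hi'
  have h1 : IsLin q r (B ^ (q ^ r) ^ j) := aux_isLin_pow_pow hp ht hB j
  have h2 : IsLin q r (C (A.coeff ((q ^ r) ^ j)) * B ^ (q ^ r) ^ j) := by
    intro a ha
    refine h1 a ?_
    have := Polynomial.support_smul (A.coeff ((q ^ r) ^ j)) (B ^ (q ^ r) ^ j)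
    rw [smul_eq_C_mul] at this
    exact this ha
  exact h2 i' hi'

theorem aux_dvd_comp (hq2 : 2 ≤ q ^ r) {A : F[X]} (B : F[X]) (hA : IsLin q r A) :
    B ∣ A.comp B := by
  rw [aux_comp_eq_sum]
  refine Finset.dvd_sum fun i hi => ?_
  obtain ⟨j, rfl⟩ := (aux_isLin_iff.1 hA) i hi
  exact Dvd.dvd.mul_left (dvd_pow_self B (by positivity)) _

theorem aux_natDegree_isLin {P : F[X]} (hP : IsLin q r P) (h0 : P ≠ 0) :
    ∃ d : ℕ, P.natDegree = (q ^ r) ^ d :=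
  aux_isLin_iff.1 hP _ (Polynomial.natDegree_mem_support_of_nonzero h0)

theorem aux_natDegree_pos (hq2 : 2 ≤ q ^ r) {P : F[X]} (hP : IsLin q r P) (h0 : P ≠ 0) :
    1 ≤ P.natDegree := by
  obtain ⟨d, hd⟩ := aux_natDegree_isLin hP h0
  rw [hd]
  exact Nat.one_le_pow _ _ (by omega)

theorem aux_divmod (hq2 : 2 ≤ q ^ r) {p u : ℕ} (hp : p.Prime) [CharP F p]
    (ht : q ^ r = p ^ u) {G : F[X]} (hGlin : IsLin q r G) (hGm : G.Monic) :
    ∀ P : F[X], IsLin q r P →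
      ∃ A R : F[X], IsLin q r A ∧ IsLin q r R ∧ P = A.comp G + R ∧
        R.natDegree < G.natDegree := by
  have hG0 : G ≠ 0 := hGm.ne_zero
  have hG1 : 1 ≤ G.natDegree := aux_natDegree_pos hq2 hGlin hG0
  obtain ⟨dG, hdG⟩ := aux_natDegree_isLin hGlin hG0
  suffices H : ∀ d : ℕ, ∀ P : F[X], IsLin q r P → P.natDegree ≤ d →
      ∃ A R : F[X], IsLin q r A ∧ IsLin q r R ∧ P = A.comp G + R ∧
        R.natDegree < G.natDegree by
    exact fun P hP => H P.natDegree P hP le_rfl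
  intro d
  induction d using Nat.strong_induction_on with
  | _ d ih =>
    intro P hP hdeg
    by_cases hlt : P.natDegree < G.natDegree
    · exact ⟨0, P, aux_isLin_zero, hP, by simp, hlt⟩
    push_neg at hlt
    have hP0 : P ≠ 0 := by
      rintro rfl
      simp only [natDegree_zero] at hlt; omega
    obtain ⟨dF, hdF⟩ := aux_natDegree_isLin hP hP0
    have hdd : dG ≤ dF := by
      have : (q ^ r) ^ dG ≤ (q ^ r) ^ dF := by rw [← hdG, ← hdF]; exact hlt
      exact (Nat.pow_le_pow_iff_right (by omega)).1 this
    set c := P.leadingCoeff with hc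
    set M : F[X] := C c * G ^ (q ^ r) ^ (dF - dG) with hM
    have hMnd : M.natDegree = P.natDegree := by
      rw [hM, natDegree_C_mul (leadingCoeff_ne_zero.2 hP0), natDegree_pow, hdG, hdF,
        ← pow_add, Nat.sub_add_cancel hdd]
    have hMlc : M.leadingCoeff = c := by
      rw [hM, leadingCoeff_mul, leadingCoeff_C, (hGm.pow _).leadingCoeff, mul_one]
    have hM0 : M ≠ 0 := by
      intro h
      exact leadingCoeff_ne_zero.2 hP0 (by rw [← hc, ← hMlc, h, leadingCoeff_zero])
    have hdegeq : P.degree = M.degree := by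
      rw [degree_eq_natDegree hP0, degree_eq_natDegree hM0, hMnd]
    have hsub : (P - M).degree < P.degree := degree_sub_lt hdegeq hP0 hMlc.symm
    have hsublin : IsLin q r (P - M) := by
      refine aux_isLin_sub hP ?_
      exact aux_isLin_C_mul _ (aux_isLin_pow_pow hp ht hGlin _)
    have hsubnd : (P - M).natDegree < P.natDegree := by
      by_cases h0 : P - M = 0
      · rw [h0, natDegree_zero]; omega
      · exact natDegree_lt_natDegree h0 hsub
    obtain ⟨A', R, hA', hR, hrep, hRd⟩ :=
      ih (P - M).natDegree (by omega) (P - M) hsublin le_rfl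
    refine ⟨C c * X ^ (q ^ r) ^ (dF - dG) + A', R, aux_isLin_add (aux_isLin_monomial _ _) hA',
      hR, ?_, hRd⟩
    rw [add_comp, mul_comp, C_comp, X_pow_comp]
    have : P = M + (P - M) := by ring
    rw [this, hrep, hM]
    ring

end LinBasics

section VecPoly

variable {F : Type*} [Field F] {q r : ℕ}

/-- extension of a `Fin n`-vector by zero -/
def vext {F : Type*} [Field F] {n : ℕ} (v : Fin n → F) (j : ℕ) : F :=
  if h : j < n then v ⟨j, h⟩ else 0

theorem aux_vecPoly_eq_linsum {n : ℕ} (v : Fin n → F) :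
    vecPoly q r n v = ∑ j ∈ Finset.range n, C (vext v j) * X ^ (q ^ r) ^ j := by
  rw [vecPoly, ← Fin.sum_univ_eq_sum_range (fun j => C (vext v j) * X ^ (q ^ r) ^ j) n]
  refine Finset.sum_congr rfl fun i _ => ?_
  rw [vext, dif_pos i.isLt, pow_mul, Fin.eta]

theorem aux_vecPoly_coeff (hq2 : 2 ≤ q ^ r) {n : ℕ} (v : Fin n → F) (i : Fin n) :
    (vecPoly q r n v).coeff ((q ^ r) ^ (i : ℕ)) = v i := by
  rw [aux_vecPoly_eq_linsum, aux_coeff_linsum hq2, if_pos i.isLt, vext, dif_pos i.isLt, Fin.eta]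

theorem aux_isLin_vecPoly {n : ℕ} (v : Fin n → F) : IsLin q r (vecPoly q r n v) := by
  rw [aux_vecPoly_eq_linsum]
  exact aux_isLin_sum _ _ fun j _ => aux_isLin_monomial _ _

theorem aux_vecPoly_natDegree_lt (hq2 : 2 ≤ q ^ r) {n : ℕ} (v : Fin n → F) :
    (vecPoly q r n v).natDegree < (q ^ r) ^ n := by
  rw [aux_vecPoly_eq_linsum]; exact aux_natDegree_linsum_lt hq2 _ _

theorem aux_vecPoly_inj (hq2 : 2 ≤ q ^ r) {n : ℕ} {v w : Fin n → F}
    (h : vecPoly q r n v = vecPoly q r n w) : v = w := by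
  funext i
  rw [← aux_vecPoly_coeff hq2 v i, ← aux_vecPoly_coeff hq2 w i, h]

theorem aux_vecPoly_zero {n : ℕ} : vecPoly q r n (0 : Fin n → F) = 0 := by
  simp [vecPoly]

theorem aux_vecPoly_add {n : ℕ} (v w : Fin n → F) :
    vecPoly q r n (v + w) = vecPoly q r n v + vecPoly q r n w := by
  rw [vecPoly, vecPoly, vecPoly, ← Finset.sum_add_distrib]
  exact Finset.sum_congr rfl fun i _ => by rw [Pi.add_apply, C_add, add_mul]

theorem aux_vecPoly_sub {n : ℕ} (v w : Fin n → F) :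
    vecPoly q r n (v - w) = vecPoly q r n v - vecPoly q r n w := by
  rw [vecPoly, vecPoly, vecPoly, ← Finset.sum_sub_distrib]
  exact Finset.sum_congr rfl fun i _ => by rw [Pi.sub_apply, C_sub, sub_mul]

theorem aux_vecPoly_smul {n : ℕ} (c : F) (v : Fin n → F) :
    vecPoly q r n (c • v) = C c * vecPoly q r n v := by
  rw [vecPoly, vecPoly, Finset.mul_sum]
  exact Finset.sum_congr rfl fun i _ => by
    rw [Pi.smul_apply, smul_eq_mul, C_mul, mul_assoc]

theorem aux_lin_eq_vecPoly (hq2 : 2 ≤ q ^ r) {n : ℕ} {P : F[X]} (hP : IsLin q r P)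
    (hd : P.natDegree < (q ^ r) ^ n) :
    P = vecPoly q r n (fun i : Fin n => P.coeff ((q ^ r) ^ (i : ℕ))) := by
  rw [aux_vecPoly_eq_linsum]
  conv_lhs => rw [aux_lin_rep hq2 (aux_isLin_iff.1 hP) hd]
  refine Finset.sum_congr rfl fun j hj => ?_
  rw [vext, dif_pos (Finset.mem_range.1 hj)]

theorem aux_Xqn_natDegree (hq2 : 2 ≤ q ^ r) {n : ℕ} (hn : 0 < n) :
    (X ^ q ^ (r * n) - X : F[X]).natDegree = (q ^ r) ^ n := by
  have h2 : 2 ≤ (q ^ r) ^ n := le_trans hq2 (Nat.le_self_pow (by omega) _)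
  rw [pow_mul, natDegree_sub_eq_left_of_natDegree_lt, natDegree_X_pow]
  rw [natDegree_X_pow, natDegree_X]; omega

theorem aux_Xqn_ne_zero (hq2 : 2 ≤ q ^ r) {n : ℕ} (hn : 0 < n) :
    (X ^ q ^ (r * n) - X : F[X]) ≠ 0 := by
  intro h
  have := aux_Xqn_natDegree (F := F) hq2 hn
  rw [h, natDegree_zero] at this
  have h2 : 2 ≤ (q ^ r) ^ n := le_trans hq2 (Nat.le_self_pow (by omega) _)
  omega

theorem aux_isLin_Xqn {n : ℕ} : IsLin q r (X ^ q ^ (r * n) - X : F[X]) := by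
  intro i hi
  have h1 : (X ^ q ^ (r * n) - X : F[X]).support ⊆ {q ^ (r * n), 1} := by
    intro a ha
    rw [Polynomial.mem_support_iff] at ha
    by_contra hmem
    simp only [Finset.mem_insert, Finset.mem_singleton, not_or] at hmem
    rw [Polynomial.coeff_sub, Polynomial.coeff_X_pow, Polynomial.coeff_X,
      if_neg hmem.1, if_neg (fun h => hmem.2 h.symm)] at ha
    simp at ha
  rcases Finset.mem_insert.1 (h1 hi) with h | h
  · exact ⟨n, h⟩
  · exact ⟨0, by simpa using Finset.mem_singleton.1 h⟩

theorem aux_eq_zero_of_dvd_small (hq2 : 2 ≤ q ^ r) {n : ℕ} (hn : 0 < n) {D : F[X]}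
    (hdvd : (X ^ q ^ (r * n) - X : F[X]) ∣ D) (hD : D.natDegree < (q ^ r) ^ n) : D = 0 := by
  by_contra h0
  have := Polynomial.natDegree_le_of_dvd hdvd h0
  rw [aux_Xqn_natDegree hq2 hn] at this
  omega

theorem aux_classEq_vecPoly_eq (hq2 : 2 ≤ q ^ r) {n : ℕ} (hn : 0 < n) {v w : Fin n → F}
    (h : ClassEq q r n (vecPoly q r n v) (vecPoly q r n w)) : v = w := by
  refine aux_vecPoly_inj hq2 (sub_eq_zero.1 ?_)
  refine aux_eq_zero_of_dvd_small hq2 hn h ?_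
  calc (vecPoly q r n v - vecPoly q r n w).natDegree
      ≤ max (vecPoly q r n v).natDegree (vecPoly q r n w).natDegree := natDegree_sub_le _ _
    _ < (q ^ r) ^ n := max_lt (aux_vecPoly_natDegree_lt hq2 v) (aux_vecPoly_natDegree_lt hq2 w)

end VecPoly

section MemCxLemmas

variable {F : Type*} [Field F] {q r n : ℕ} [NeZero n] {Co : Submodule F (Fin n → F)}

theorem aux_memcx_zero : MemCx q r n (Co : Set (Fin n → F)) 0 :=
  ⟨0, Co.zero_mem, by rw [ClassEq, aux_vecPoly_zero, sub_zero]; exact dvd_zero _⟩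

theorem aux_memcx_add {P Q : F[X]} (hP : MemCx q r n (Co : Set (Fin n → F)) P)
    (hQ : MemCx q r n (Co : Set (Fin n → F)) Q) :
    MemCx q r n (Co : Set (Fin n → F)) (P + Q) := by
  obtain ⟨v, hv, hvc⟩ := hP
  obtain ⟨w, hw, hwc⟩ := hQ
  refine ⟨v + w, Co.add_mem hv hw, ?_⟩
  rw [ClassEq, aux_vecPoly_add]
  have := dvd_add hvc hwc
  rwa [show P - vecPoly q r n v + (Q - vecPoly q r n w)
    = P + Q - (vecPoly q r n v + vecPoly q r n w) by ring] at this

theorem aux_memcx_sub {P Q : F[X]} (hP : MemCx q r n (Co : Set (Fin n → F)) P)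
    (hQ : MemCx q r n (Co : Set (Fin n → F)) Q) :
    MemCx q r n (Co : Set (Fin n → F)) (P - Q) := by
  obtain ⟨v, hv, hvc⟩ := hP
  obtain ⟨w, hw, hwc⟩ := hQ
  refine ⟨v - w, Co.sub_mem hv hw, ?_⟩
  rw [ClassEq, aux_vecPoly_sub]
  have := dvd_sub hvc hwc
  rwa [show P - vecPoly q r n v - (Q - vecPoly q r n w)
    = P - Q - (vecPoly q r n v - vecPoly q r n w) by ring] at this

theorem aux_memcx_C_mul (c : F) {P : F[X]} (hP : MemCx q r n (Co : Set (Fin n → F)) P) :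
    MemCx q r n (Co : Set (Fin n → F)) (C c * P) := by
  obtain ⟨v, hv, hvc⟩ := hP
  refine ⟨c • v, Co.smul_mem c hv, ?_⟩
  rw [ClassEq, aux_vecPoly_smul, ← mul_sub]
  exact Dvd.dvd.mul_left hvc _

theorem aux_vecPoly_pow {p u : ℕ} (hp : p.Prime) [CharP F p] (ht : q ^ r = p ^ u)
    (v : Fin n → F) :
    (vecPoly q r n v) ^ q ^ r = ∑ i : Fin n, C (v i ^ q ^ r) * X ^ (q ^ r) ^ ((i : ℕ) + 1) := by
  haveI : Fact p.Prime := ⟨hp⟩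
  rw [vecPoly, ht, sum_pow_char_pow]
  refine Finset.sum_congr rfl fun i _ => ?_
  rw [← ht, mul_pow, ← C_pow, ← pow_mul, pow_mul q r, ← pow_succ]

theorem aux_val_add_one (i : Fin n) : ((i + 1 : Fin n) : ℕ) = ((i : ℕ) + 1) % n := by
  rw [Fin.val_add, Fin.val_one', Nat.add_mod_mod]

theorem aux_classEq_frob (hq2 : 2 ≤ q ^ r) {p u : ℕ} (hp : p.Prime) [CharP F p]
    (ht : q ^ r = p ^ u) (v : Fin n → F) :
    ClassEq q r n ((vecPoly q r n v) ^ q ^ r)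
      (vecPoly q r n (fun i : Fin n => v (i - 1) ^ q ^ r)) := by
  rw [ClassEq, aux_vecPoly_pow hp ht]
  have hre : (vecPoly q r n (fun i : Fin n => v (i - 1) ^ q ^ r))
      = ∑ i : Fin n, C (v i ^ q ^ r) * X ^ (q ^ r) ^ (((i + 1 : Fin n)) : ℕ) := by
    rw [vecPoly]
    refine Fintype.sum_equiv (Equiv.subRight (1 : Fin n)) _ _ fun i => ?_
    simp only [Equiv.subRight_apply]
    rw [sub_add_cancel, pow_mul]
  rw [hre, ← Finset.sum_sub_distrib]
  refine Finset.dvd_sum fun i _ => ?_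
  rw [← mul_sub]
  refine Dvd.dvd.mul_left ?_ _
  by_cases h : (i : ℕ) + 1 = n
  · rw [aux_val_add_one, h, Nat.mod_self, pow_zero, pow_one, pow_mul]
  · have hlt : (i : ℕ) + 1 < n := by have := i.isLt; omega
    rw [aux_val_add_one, Nat.mod_eq_of_lt hlt, sub_self]
    exact dvd_zero _

theorem aux_memcx_pow (hC : IsQrCyclic q r n (Co : Set (Fin n → F))) (hq2 : 2 ≤ q ^ r)
    {p u : ℕ} (hp : p.Prime) [CharP F p] (ht : q ^ r = p ^ u) {P : F[X]}
    (h : MemCx q r n (Co : Set (Fin n → F)) P) :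
    MemCx q r n (Co : Set (Fin n → F)) (P ^ q ^ r) := by
  obtain ⟨v, hv, hvc⟩ := h
  refine ⟨_, hC v hv, ?_⟩
  have h1 : (X ^ q ^ (r * n) - X : F[X]) ∣ P ^ q ^ r - (vecPoly q r n v) ^ q ^ r :=
    dvd_trans hvc (sub_dvd_pow_sub_pow _ _ _)
  have h2 := aux_classEq_frob hq2 hp ht v
  rw [ClassEq] at h2 ⊢
  have := dvd_add h1 h2
  rwa [sub_add_sub_cancel] at this

theorem aux_memcx_pow_pow (hC : IsQrCyclic q r n (Co : Set (Fin n → F))) (hq2 : 2 ≤ q ^ r)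
    {p u : ℕ} (hp : p.Prime) [CharP F p] (ht : q ^ r = p ^ u) {P : F[X]}
    (h : MemCx q r n (Co : Set (Fin n → F)) P) (j : ℕ) :
    MemCx q r n (Co : Set (Fin n → F)) (P ^ (q ^ r) ^ j) := by
  induction j with
  | zero => simpa using h
  | succ j ih =>
    rw [pow_succ, pow_mul]
    exact aux_memcx_pow hC hq2 hp ht ih

theorem aux_memcx_comp (hC : IsQrCyclic q r n (Co : Set (Fin n → F))) (hq2 : 2 ≤ q ^ r)
    {p u : ℕ} (hp : p.Prime) [CharP F p] (ht : q ^ r = p ^ u) {A P : F[X]}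
    (hA : IsLin q r A) (h : MemCx q r n (Co : Set (Fin n → F)) P) :
    MemCx q r n (Co : Set (Fin n → F)) (A.comp P) := by
  rw [aux_comp_eq_sum]
  refine Finset.sum_induction _ _ (fun _ _ => aux_memcx_add) aux_memcx_zero fun i hi => ?_
  obtain ⟨j, rfl⟩ := (aux_isLin_iff.1 hA) i hi
  exact aux_memcx_C_mul _ (aux_memcx_pow_pow hC hq2 hp ht h j)

end MemCxLemmas

theorem aux_charP (E : Type*) [Field E] [Fintype E] {p N : ℕ} (hp : p.Prime)
    (hN : 0 < N) (hcard : Fintype.card E = p ^ N) : CharP E p := by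
  haveI : CharP E (ringChar E) := ringChar.charP E
  obtain ⟨k, hck, hcard2⟩ := FiniteField.card E (ringChar E)
  have hdvd : ringChar E ∣ p ^ N := by
    rw [← hcard, hcard2]
    exact dvd_pow_self _ (by exact_mod_cast k.pos.ne')
  have : ringChar E = p := by
    have := hck.dvd_of_dvd_pow hdvd
    exact (Nat.prime_dvd_prime_iff_eq hck hp).1 this
  rw [← this]
  infer_instance

/-- Let `C ⊆ F_{q^m}^n` be an `F_{q^m}`-linear `q^r`-cyclic code with
minimal generator `G(x)` of `C(x)`, and root space `T = Z(G) ⊆ F_{q^{rn}}`. Then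
`G(x) = ∏_{β ∈ T} (x - β)` (conventional product) and
`dim_{F_{q^m}} C = n - dim_{F_{q^r}} T`. -/
theorem statement0
    (q m n r : ℕ) (hq : IsPrimePow q) (hm : 0 < m) (hr : 0 < r) [NeZero n]
    (hmn : m ∣ r * n)
    (Fqm Fqr K : Type*) [Field Fqm] [Fintype Fqm] [Field Fqr] [Fintype Fqr]
    [Field K] [Fintype K] [Algebra Fqm K] [Algebra Fqr K]
    (hcardm : Fintype.card Fqm = q ^ m) (hcardr : Fintype.card Fqr = q ^ r)
    (hcardK : Fintype.card K = q ^ (r * n))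
    (C : Submodule Fqm (Fin n → Fqm))
    (hC : IsQrCyclic q r n (C : Set (Fin n → Fqm)))
    (G : Polynomial Fqm) (hG : IsMinGen q r n (C : Set (Fin n → Fqm)) G)
    (T : Set K) (hT : T = ZSet K G) :
    G.map (algebraMap Fqm K)
        = ∏ β ∈ (Set.toFinite T).toFinset, (Polynomial.X - Polynomial.C β) ∧
      Module.finrank Fqm ↥C = n - Module.finrank Fqr ↥(Submodule.span Fqr T) := by
  classical
  obtain ⟨hGlin, hGm, hGmem, hGmin⟩ := hG
  obtain ⟨p, e, hpp, he, hqpe⟩ := hq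
  have hp : p.Prime := hpp.nat_prime
  have hq2' : 2 ≤ q := by
    calc 2 ≤ p := hp.two_le
      _ ≤ p ^ e := Nat.le_self_pow (by omega) p
      _ = q := hqpe
  have hq2 : 2 ≤ q ^ r := le_trans hq2' (Nat.le_self_pow (by omega) q)
  have hn : 0 < n := Nat.pos_of_ne_zero (NeZero.ne n)
  have ht : q ^ r = p ^ (e * r) := by rw [← hqpe, ← pow_mul]
  haveI hchF : CharP Fqm p := aux_charP Fqm hp (N := e * m) (by positivity)
    (by rw [hcardm, ← hqpe, ← pow_mul])
  haveI hchK : CharP K p := aux_charP K hp (N := e * (r * n)) (by positivity)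
    (by rw [hcardK, ← hqpe, ← pow_mul])
  haveI : Fact p.Prime := ⟨hp⟩
  -- minimality: elements of C(x) of degree < deg G vanish
  have hmin0 : ∀ R : Polynomial Fqm, IsLin q r R → MemCx q r n (↑C) R →
      R.natDegree < G.natDegree → R = 0 := by
    intro R hRlin hRmem hRd
    by_contra h0
    have hle := hGmin (R * Polynomial.C R.leadingCoeff⁻¹)
      (by rw [mul_comm]; exact aux_isLin_C_mul _ hRlin)
      (monic_mul_leadingCoeff_inv h0)
      (by rw [mul_comm]; exact aux_memcx_C_mul _ hRmem)
    rw [natDegree_mul_C (inv_ne_zero (leadingCoeff_ne_zero.2 h0))] at hle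
    omega
  -- Step A : `X^(q^(rn)) - X = H ∘ G`
  have hXqlin : IsLin q r (X ^ q ^ (r * n) - X : Fqm[X]) := aux_isLin_Xqn
  have hXqmem : MemCx q r n (↑C) (X ^ q ^ (r * n) - X : Fqm[X]) :=
    ⟨0, C.zero_mem, by rw [ClassEq, aux_vecPoly_zero, sub_zero]⟩
  obtain ⟨H, R1, hHlin, hR1lin, hrep1, hR1d⟩ := aux_divmod hq2 hp ht hGlin hGm _ hXqlin
  have hR1mem : MemCx q r n (↑C) R1 := by
    have := aux_memcx_sub hXqmem (aux_memcx_comp hC hq2 hp ht hHlin hGmem)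
    rwa [hrep1, add_sub_cancel_left] at this
  have hR10 : R1 = 0 := hmin0 R1 hR1lin hR1mem hR1d
  have hHG : (X ^ q ^ (r * n) - X : Fqm[X]) = H.comp G := by rw [hrep1, hR10, add_zero]
  have hGdvd : G ∣ (X ^ q ^ (r * n) - X : Fqm[X]) := hHG ▸ aux_dvd_comp hq2 G hHlin
  have hG0 : G ≠ 0 := hGm.ne_zero
  have hG1 : 1 ≤ G.natDegree := aux_natDegree_pos hq2 hGlin hG0
  obtain ⟨k, hk⟩ := aux_natDegree_isLin hGlin hG0
  have hXq0 : (X ^ q ^ (r * n) - X : Fqm[X]) ≠ 0 := aux_Xqn_ne_zero hq2 hn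
  have hkn : k ≤ n := by
    have h1 := Polynomial.natDegree_le_of_dvd hGdvd hXq0
    rw [aux_Xqn_natDegree hq2 hn, hk] at h1
    exact (Nat.pow_le_pow_iff_right (by omega)).1 h1
  have hH0 : H ≠ 0 := by rintro rfl; rw [zero_comp] at hHG; exact hXq0 hHG
  have h2rn : 2 ≤ q ^ (r * n) := by
    rw [pow_mul]; exact le_trans hq2 (Nat.le_self_pow (by omega) _)
  have hXqm : (X ^ q ^ (r * n) - X : Fqm[X]).Monic := by
    refine (monic_X_pow _).sub_of_left ?_
    rw [degree_X_pow, degree_X]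
    exact_mod_cast (by omega : 1 < q ^ (r * n))
  have hHm : H.Monic := by
    have h1 := hXqm
    rw [hHG, Monic] at h1
    rwa [leadingCoeff_comp (by omega), hGm.leadingCoeff, one_pow, mul_one, ← Monic] at h1
  obtain ⟨dH, hdH⟩ := aux_natDegree_isLin hHlin hH0
  have hdHk : dH + k = n := by
    have h1 : (q ^ r) ^ n = (q ^ r) ^ (dH + k) := by
      rw [pow_add, ← hdH, ← hk, ← natDegree_comp, ← hHG, aux_Xqn_natDegree hq2 hn]
    exact (aux_pow_inj hq2 h1).symm
  have hHdeg : H.natDegree = (q ^ r) ^ (n - k) := by rw [hdH]; congr 1; omega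
  -- Component 1: roots of G over K
  have hGKm : (G.map (algebraMap Fqm K)).Monic := hGm.map _
  have hGK0 : G.map (algebraMap Fqm K) ≠ 0 := hGKm.ne_zero
  have hGKdvd : G.map (algebraMap Fqm K) ∣ (X ^ q ^ (r * n) - X : K[X]) := by
    have h2 := Polynomial.map_dvd (algebraMap Fqm K) hGdvd
    rwa [Polynomial.map_sub, Polynomial.map_pow, Polynomial.map_X] at h2
  have hroots : (X ^ q ^ (r * n) - X : K[X]).roots = Finset.univ.val := by
    have := FiniteField.roots_X_pow_card_sub_X K
    rwa [hcardK] at this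
  have hsplits : Splits (X ^ q ^ (r * n) - X : K[X]) := by
    rw [splits_iff_card_roots, hroots, aux_Xqn_natDegree hq2 hn, ← pow_mul,
      ← Finset.card_def, Finset.card_univ, hcardK]
  have hsep : (X ^ q ^ (r * n) - X : K[X]).Separable := by
    have hder : derivative (X ^ q ^ (r * n) - X : K[X]) = -1 := by
      rw [derivative_sub, derivative_X_pow, derivative_X]
      have hc0 : ((q ^ (r * n) : ℕ) : K) = 0 := by
        rw [← hcardK]; exact FiniteField.cast_card_eq_zero K
      rw [hc0, map_zero, zero_mul, zero_sub]
    rw [Polynomial.separable_def, hder]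
    exact ⟨0, -1, by ring⟩
  have hGKsplits : Splits (G.map (algebraMap Fqm K)) :=
    hsplits.of_dvd (aux_Xqn_ne_zero hq2 hn) hGKdvd
  have hGKsep : (G.map (algebraMap Fqm K)).Separable := hsep.of_dvd hGKdvd
  have hGKnodup : (G.map (algebraMap Fqm K)).roots.Nodup := Polynomial.nodup_roots hGKsep
  have hTfin : (Set.toFinite T).toFinset = (G.map (algebraMap Fqm K)).roots.toFinset := by
    ext β
    rw [Set.Finite.mem_toFinset, Multiset.mem_toFinset, Polynomial.mem_roots hGK0, hT]
    simp [ZSet, Polynomial.IsRoot, Polynomial.eval_map, Polynomial.aeval_def]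
  have hcomp1 : G.map (algebraMap Fqm K)
      = ∏ β ∈ (Set.toFinite T).toFinset, (X - Polynomial.C β) := by
    conv_lhs => rw [hGKsplits.eq_prod_roots_of_monic hGKm]
    rw [hTfin, Finset.prod_eq_multiset_prod, Multiset.toFinset_val,
      Multiset.dedup_eq_self.2 hGKnodup]
  -- cardinality of the root space
  have hrootscard : Multiset.card (G.map (algebraMap Fqm K)).roots = (q ^ r) ^ k := by
    rw [splits_iff_card_roots.1 hGKsplits, hGm.natDegree_map, hk]
  have hTcard : (Set.toFinite T).toFinset.card = (q ^ r) ^ k := by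
    rw [hTfin, Multiset.toFinset_card_eq_card_iff_nodup.2 hGKnodup]
    exact hrootscard
  -- the root space is an Fqr-submodule
  have hGrep : G = ∑ j ∈ Finset.range (n + 1),
      Polynomial.C (G.coeff ((q ^ r) ^ j)) * X ^ (q ^ r) ^ j := by
    refine aux_lin_rep hq2 (aux_isLin_iff.1 hGlin) ?_
    rw [hk]
    exact lt_of_le_of_lt (Nat.pow_le_pow_right (by omega) hkn)
      (Nat.pow_lt_pow_right (by omega) (by omega))
  have haev : ∀ β : K, (Polynomial.aeval β) G
      = ∑ j ∈ Finset.range (n + 1),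
          algebraMap Fqm K (G.coeff ((q ^ r) ^ j)) * β ^ (q ^ r) ^ j := by
    intro β
    conv_lhs => rw [hGrep]
    simp [map_sum, aeval_C, aeval_X]
  have hTmem : ∀ β : K, β ∈ T ↔ (Polynomial.aeval β) G = 0 := by
    intro β; rw [hT]; exact Iff.rfl
  have hpowj : ∀ j : ℕ, (q ^ r) ^ j = p ^ (e * r * j) := fun j => by rw [ht, ← pow_mul]
  have hfixr : ∀ (c : Fqr) (j : ℕ), c ^ (q ^ r) ^ j = c := by
    intro c j
    induction j with
    | zero => rw [pow_zero, pow_one]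
    | succ j ih =>
      rw [pow_succ, pow_mul, ih, ← hcardr]
      exact FiniteField.pow_card c
  have hT0 : (0 : K) ∈ T := by
    rw [hTmem, haev]
    refine Finset.sum_eq_zero fun j hj => ?_
    rw [zero_pow (by positivity), mul_zero]
  have hTadd : ∀ a b : K, a ∈ T → b ∈ T → a + b ∈ T := by
    intro a b ha hb
    rw [hTmem, haev] at ha hb ⊢
    have hsplit : ∀ j ∈ Finset.range (n + 1),
        algebraMap Fqm K (G.coeff ((q ^ r) ^ j)) * (a + b) ^ (q ^ r) ^ j
          = algebraMap Fqm K (G.coeff ((q ^ r) ^ j)) * a ^ (q ^ r) ^ j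
            + algebraMap Fqm K (G.coeff ((q ^ r) ^ j)) * b ^ (q ^ r) ^ j := by
      intro j hj
      rw [hpowj j, add_pow_char_pow, mul_add]
    rw [Finset.sum_congr rfl hsplit, Finset.sum_add_distrib, ha, hb, add_zero]
  have hTsmul : ∀ (c : Fqr) (β : K), β ∈ T → c • β ∈ T := by
    intro c β hβ
    rw [hTmem, haev] at hβ ⊢
    have hterm : ∀ j ∈ Finset.range (n + 1),
        algebraMap Fqm K (G.coeff ((q ^ r) ^ j)) * (c • β) ^ (q ^ r) ^ j
          = algebraMap Fqr K c
            * (algebraMap Fqm K (G.coeff ((q ^ r) ^ j)) * β ^ (q ^ r) ^ j) := by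
      intro j hj
      rw [Algebra.smul_def, mul_pow, ← map_pow, hfixr]
      ring
    rw [Finset.sum_congr rfl hterm, ← Finset.mul_sum, hβ, mul_zero]
  let S : Submodule Fqr K :=
    { carrier := T
      zero_mem' := hT0
      add_mem' := fun {a b} ha hb => hTadd a b ha hb
      smul_mem' := fun c {β} hβ => hTsmul c β hβ }
  have hspan : Submodule.span Fqr T = S := by
    have hTS : T = (S : Set K) := rfl
    rw [hTS]; exact Submodule.span_eq S
  haveI : Fintype ↥S := Fintype.ofFinite _
  have hcards : Fintype.card ↥S = Fintype.card Fqr ^ Module.finrank Fqr ↥S :=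
    Module.card_eq_pow_finrank
  have hcardsT : Fintype.card ↥S = (q ^ r) ^ k := by
    calc Fintype.card ↥S = Nat.card ↥S := Nat.card_eq_fintype_card.symm
      _ = Nat.card ↥T := Nat.card_congr (Equiv.subtypeEquivRight fun x => Iff.rfl)
      _ = T.ncard := Nat.card_coe_set_eq T
      _ = (Set.toFinite T).toFinset.card := Set.ncard_eq_toFinset_card T (Set.toFinite T)
      _ = (q ^ r) ^ k := hTcard
  have hfinrankS : Module.finrank Fqr ↥S = k := by
    refine aux_pow_inj hq2 ?_
    rw [← hcardsT, hcards, hcardr]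
  -- Component 2 : dimension of the code
  have hcompdeg : ∀ P : Polynomial Fqm, P.natDegree < (q ^ r) ^ (n - k) →
      (P.comp G).natDegree < (q ^ r) ^ n := by
    intro P hPd
    have h1 : (P.comp G).natDegree = P.natDegree * (q ^ r) ^ k := by
      rw [natDegree_comp, hk]
    rw [h1]
    have hpos : 0 < (q ^ r) ^ k := by positivity
    calc P.natDegree * (q ^ r) ^ k ≤ ((q ^ r) ^ (n - k) - 1) * (q ^ r) ^ k :=
          Nat.mul_le_mul_right _ (by omega)
      _ < (q ^ r) ^ (n - k) * (q ^ r) ^ k := by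
          have h2 : 0 < (q ^ r) ^ (n - k) := by positivity
          exact (Nat.mul_lt_mul_right hpos).2 (by omega)
      _ = (q ^ r) ^ n := by rw [← pow_add]; congr 1; omega
  set φ : (Fin (n - k) → Fqm) → (Fin n → Fqm) :=
    fun a i => ((vecPoly q r (n - k) a).comp G).coeff ((q ^ r) ^ (i : ℕ)) with hφdef
  have hkey : ∀ a : Fin (n - k) → Fqm,
      vecPoly q r n (φ a) = (vecPoly q r (n - k) a).comp G := by
    intro a
    exact (aux_lin_eq_vecPoly hq2 (aux_isLin_comp hp ht (aux_isLin_vecPoly a) hGlin)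
      (hcompdeg _ (aux_vecPoly_natDegree_lt hq2 a))).symm
  have hmemφ : ∀ a, φ a ∈ C := by
    intro a
    obtain ⟨w, hw, hcl⟩ := aux_memcx_comp hC hq2 hp ht (aux_isLin_vecPoly a) hGmem
    have hcl2 : ClassEq q r n (vecPoly q r n (φ a)) (vecPoly q r n w) := by
      rw [hkey a]; exact hcl
    have heq := aux_classEq_vecPoly_eq hq2 hn hcl2
    rw [heq]; exact hw
  have hinj : ∀ a b : Fin (n - k) → Fqm, φ a = φ b → a = b := by
    intro a b hab
    have h1 : vecPoly q r n (φ a) = vecPoly q r n (φ b) := by rw [hab]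
    rw [hkey a, hkey b] at h1
    have h2 : (vecPoly q r (n - k) a - vecPoly q r (n - k) b).comp G = 0 := by
      rw [sub_comp, h1, sub_self]
    have h3 : vecPoly q r (n - k) a - vecPoly q r (n - k) b = 0 := by
      rcases Polynomial.comp_eq_zero_iff.1 h2 with h | ⟨_, hG'⟩
      · exact h
      · exfalso
        have hdc := natDegree_C (G.coeff 0)
        rw [← hG'] at hdc
        omega
    rw [← aux_vecPoly_sub] at h3
    have h4 : a - b = (0 : Fin (n - k) → Fqm) :=
      aux_vecPoly_inj hq2 (by rw [h3, aux_vecPoly_zero])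
    exact sub_eq_zero.1 h4
  have hsurj : ∀ v : Fin n → Fqm, v ∈ C → ∃ a, φ a = v := by
    intro v hv
    have hvmem : MemCx q r n (↑C) (vecPoly q r n v) :=
      ⟨v, hv, by rw [ClassEq, sub_self]; exact dvd_zero _⟩
    obtain ⟨A, R, hAlin, hRlin, hrepA, hRd⟩ :=
      aux_divmod hq2 hp ht hGlin hGm _ (aux_isLin_vecPoly v)
    have hRmem : MemCx q r n (↑C) R := by
      have := aux_memcx_sub hvmem (aux_memcx_comp hC hq2 hp ht hAlin hGmem)
      rwa [hrepA, add_sub_cancel_left] at this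
    have hR0 : R = 0 := hmin0 R hRlin hRmem hRd
    have hvG : vecPoly q r n v = A.comp G := by rw [hrepA, hR0, add_zero]
    obtain ⟨B, R2, hBlin, hR2lin, hrepB, hR2d⟩ := aux_divmod hq2 hp ht hHlin hHm A hAlin
    rw [hHdeg] at hR2d
    have hcompR2 : vecPoly q r n v - R2.comp G
        = B.comp (X ^ q ^ (r * n) - X : Fqm[X]) := by
      rw [hvG, hrepB, add_comp, comp_assoc, ← hHG]
      ring
    have hdvd2 : (X ^ q ^ (r * n) - X : Fqm[X]) ∣ vecPoly q r n v - R2.comp G := by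
      rw [hcompR2]; exact aux_dvd_comp hq2 _ hBlin
    have h0 : vecPoly q r n v - R2.comp G = 0 := by
      refine aux_eq_zero_of_dvd_small hq2 hn hdvd2 ?_
      calc (vecPoly q r n v - R2.comp G).natDegree
          ≤ max (vecPoly q r n v).natDegree (R2.comp G).natDegree := natDegree_sub_le _ _
        _ < (q ^ r) ^ n :=
            max_lt (aux_vecPoly_natDegree_lt hq2 v) (hcompdeg R2 hR2d)
    have heq : vecPoly q r n v = R2.comp G := sub_eq_zero.1 h0
    refine ⟨fun i : Fin (n - k) => R2.coeff ((q ^ r) ^ (i : ℕ)), ?_⟩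
    have hR2rep : R2 = vecPoly q r (n - k)
        (fun i : Fin (n - k) => R2.coeff ((q ^ r) ^ (i : ℕ))) :=
      aux_lin_eq_vecPoly hq2 hR2lin hR2d
    refine aux_vecPoly_inj hq2 ?_
    rw [hkey, ← hR2rep, ← heq]
  -- bundle into a linear equivalence
  let Φ : (Fin (n - k) → Fqm) →ₗ[Fqm] (Fin n → Fqm) :=
    { toFun := φ
      map_add' := by
        intro a b; funext i
        show ((vecPoly q r (n - k) (a + b)).comp G).coeff _
          = ((vecPoly q r (n - k) a).comp G).coeff _
            + ((vecPoly q r (n - k) b).comp G).coeff _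
        rw [aux_vecPoly_add, add_comp, coeff_add]
      map_smul' := by
        intro c a; funext i
        show ((vecPoly q r (n - k) (c • a)).comp G).coeff _
          = c * ((vecPoly q r (n - k) a).comp G).coeff _
        rw [aux_vecPoly_smul, mul_comp, C_comp, coeff_C_mul] }
  let Φ' : (Fin (n - k) → Fqm) →ₗ[Fqm] ↥C := Φ.codRestrict C hmemφ
  have hbij : Function.Bijective Φ' := by
    constructor
    · intro a b hab
      exact hinj a b (congrArg Subtype.val hab)
    · rintro ⟨v, hv⟩
      obtain ⟨a, ha⟩ := hsurj v hv
      exact ⟨a, Subtype.ext ha⟩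
  have hfinC : Module.finrank Fqm ↥C = n - k := by
    have h1 := (LinearEquiv.ofBijective Φ' hbij).finrank_eq
    rw [← h1, Module.finrank_fin_fun]
  refine ⟨hcomp1, ?_⟩
  rw [hspan, hfinrankS, hfinC]
end

section
/- Let C ⊆ F_{q^m}^n be an F_{q^m}-linear q^r-cyclic code with minimal generator G(x) of C(x) and root space T = Z(G). For a q^r-polynomial G̃(x) over F_{q^m}, the following are equivalent: (i) the class G̃ generates C(x) as a left ideal; (ii) Z(G̃) = T; (iii) G(x) = gcd(G̃(x), x^{q^{rn}} − x), the greatest common right divisor with respect to the symbolic product. -/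
set_option linter.unusedSectionVars false
set_option linter.unusedVariables false
set_option maxHeartbeats 1000000

namespace St2
open Polynomial

variable {F : Type*} [Field F] {q r : ℕ}

theorem mem_support_sum {ι : Type*} {s : Finset ι} {f : ι → Polynomial F} {i : ℕ}
    (h : i ∈ (∑ t ∈ s, f t).support) : ∃ t ∈ s, i ∈ (f t).support := by
  rw [mem_support_iff, finset_sum_coeff] at h
  obtain ⟨t, ht, h⟩ := Finset.exists_ne_zero_of_sum_ne_zero h
  exact ⟨t, ht, mem_support_iff.2 h⟩

theorem isLin_of_subset {P Q : Polynomial F} (hQ : IsLin q r Q) (h : P.support ⊆ Q.support) :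
    IsLin q r P := fun i hi => hQ i (h hi)

theorem isLin_X : IsLin q r (X : Polynomial F) := by
  intro i hi
  rw [mem_support_iff, coeff_X] at hi
  refine ⟨0, ?_⟩
  rw [mul_zero, pow_zero]
  by_contra h
  exact hi (if_neg fun h1 => h h1.symm)

theorem isLin_zero : IsLin q r (0 : Polynomial F) := by simp [IsLin]

theorem isLin_add {P Q : Polynomial F} (hP : IsLin q r P) (hQ : IsLin q r Q) :
    IsLin q r (P + Q) := by
  intro i hi
  rcases Finset.mem_union.1 (support_add hi) with h | h
  exacts [hP i h, hQ i h]

theorem isLin_neg {P : Polynomial F} (hP : IsLin q r P) : IsLin q r (-P) :=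
  isLin_of_subset hP (by simp)

theorem isLin_sub {P Q : Polynomial F} (hP : IsLin q r P) (hQ : IsLin q r Q) :
    IsLin q r (P - Q) := by
  rw [sub_eq_add_neg]; exact isLin_add hP (isLin_neg hQ)

theorem isLin_C_mul {P : Polynomial F} (c : F) (hP : IsLin q r P) : IsLin q r (C c * P) :=
  isLin_of_subset hP (by rw [← smul_eq_C_mul]; exact support_smul c P)

theorem isLin_C_mul_X_pow (c : F) (j : ℕ) : IsLin q r (C c * X ^ q ^ (r * j)) := by
  intro i hi
  have := support_C_mul_X_pow' (q ^ (r * j)) c hi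
  exact ⟨j, Finset.mem_singleton.1 this⟩

theorem lin_natDegree {P : Polynomial F} (hP : IsLin q r P) (h0 : P ≠ 0) :
    ∃ j, P.natDegree = q ^ (r * j) :=
  hP _ (natDegree_mem_support_of_nonzero h0)

theorem lin_coeff_zero (hq1 : 0 < q) {P : Polynomial F} (hP : IsLin q r P) : P.coeff 0 = 0 := by
  by_contra h
  obtain ⟨j, hj⟩ := hP 0 (mem_support_iff.2 h)
  exact (pow_pos hq1 (r * j)).ne' hj.symm

theorem X_dvd_lin (hq1 : 0 < q) {P : Polynomial F} (hP : IsLin q r P) : X ∣ P :=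
  X_dvd_iff.2 (lin_coeff_zero hq1 hP)

theorem dvd_lin_comp (hq1 : 0 < q) {Q : Polynomial F} (hQ : IsLin q r Q) (P : Polynomial F) :
    P ∣ Q.comp P := by
  obtain ⟨Q2, hQ2⟩ := X_dvd_lin hq1 hQ
  exact ⟨Q2.comp P, by rw [hQ2, mul_comp, X_comp]⟩


section Char

variable (p k : ℕ) [Fact p.Prime] [CharP F p] (hq : q = p ^ k)

include hq

theorem pow_exp (j : ℕ) : q ^ j = p ^ (k * j) := by rw [hq, ← pow_mul]

theorem pow_pow_eq (P : Polynomial F) (e : ℕ) :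
    P ^ q ^ e = ∑ i ∈ P.support, monomial (i * q ^ e) (P.coeff i ^ q ^ e) := by
  rw [pow_exp p k hq e]
  calc P ^ p ^ (k * e) = iterateFrobenius (Polynomial F) p (k * e) P := by
        rw [iterateFrobenius_def]
    _ = ∑ i ∈ P.support, iterateFrobenius (Polynomial F) p (k * e) (monomial i (P.coeff i)) := by
        conv_lhs => rw [P.as_sum_support]
        rw [map_sum]
    _ = _ := by simp [iterateFrobenius_def, monomial_pow]

theorem isLin_pow {P : Polynomial F} (hP : IsLin q r P) (e : ℕ) :
    IsLin q r (P ^ q ^ (r * e)) := by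
  intro i hi
  rw [pow_pow_eq p k hq] at hi
  obtain ⟨t, ht, hit⟩ := mem_support_sum hi
  have := support_monomial' _ _ hit
  obtain ⟨j, rfl⟩ := hP t ht
  rw [Finset.mem_singleton] at this
  exact ⟨j + e, by rw [this, ← pow_add, ← Nat.mul_add]⟩

theorem lin_comp_add {Q : Polynomial F} (hQ : IsLin q r Q) (f g : Polynomial F) :
    Q.comp (f + g) = Q.comp f + Q.comp g := by
  rw [comp_eq_sum_left, comp_eq_sum_left, comp_eq_sum_left, sum_def, sum_def, sum_def,
    ← Finset.sum_add_distrib]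
  refine Finset.sum_congr rfl fun i hi => ?_
  obtain ⟨j, rfl⟩ := hQ i hi
  rw [pow_exp p k hq, add_pow_char_pow, mul_add]

theorem lin_comp_sub {Q : Polynomial F} (hQ : IsLin q r Q) (f g : Polynomial F) :
    Q.comp (f - g) = Q.comp f - Q.comp g := by
  rw [comp_eq_sum_left, comp_eq_sum_left, comp_eq_sum_left, sum_def, sum_def, sum_def,
    ← Finset.sum_sub_distrib]
  refine Finset.sum_congr rfl fun i hi => ?_
  obtain ⟨j, rfl⟩ := hQ i hi
  rw [pow_exp p k hq, sub_pow_char_pow, mul_sub]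

theorem isLin_comp {P Q : Polynomial F} (hP : IsLin q r P) (hQ : IsLin q r Q) :
    IsLin q r (P.comp Q) := by
  rw [comp_eq_sum_left, sum_def]
  intro i hi
  obtain ⟨t, ht, hit⟩ := mem_support_sum hi
  obtain ⟨j, rfl⟩ := hP t ht
  exact isLin_C_mul _ (isLin_pow p k hq hQ j) i hit


theorem lin_div (hq2 : 2 ≤ q) (hr : 0 < r) {A D : Polynomial F} (hA : IsLin q r A)
    (hD : IsLin q r D) (hD0 : D ≠ 0) :
    ∃ Q R, IsLin q r Q ∧ IsLin q r R ∧ A = Q.comp D + R ∧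
      (R = 0 ∨ R.natDegree < D.natDegree) := by
  generalize hN : A.natDegree = N
  induction N using Nat.strong_induction_on generalizing A with
  | _ N ih =>
  by_cases h0 : A = 0
  · exact ⟨0, 0, isLin_zero, isLin_zero, by simp [h0], Or.inl rfl⟩
  by_cases hlt : A.natDegree < D.natDegree
  · exact ⟨0, A, isLin_zero, hA, by simp, Or.inr hlt⟩
  push_neg at hlt
  obtain ⟨jA, hjA⟩ := lin_natDegree hA h0
  obtain ⟨jD, hjD⟩ := lin_natDegree hD hD0
  have hjDA : jD ≤ jA := by
    rw [hjA, hjD] at hlt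
    exact Nat.le_of_mul_le_mul_left ((Nat.pow_le_pow_iff_right hq2).1 hlt) hr
  set e := q ^ (r * (jA - jD)) with he
  set c := A.leadingCoeff * (D.leadingCoeff ^ e)⁻¹ with hc
  have hDlc : D.leadingCoeff ≠ 0 := leadingCoeff_ne_zero.2 hD0
  have hc0 : c ≠ 0 := mul_ne_zero (leadingCoeff_ne_zero.2 h0) (inv_ne_zero (pow_ne_zero _ hDlc))
  set M := C c * X ^ e with hM
  have hMcomp : M.comp D = C c * D ^ e := by rw [hM, mul_comp, C_comp, X_pow_comp]
  have hMD0 : M.comp D ≠ 0 := by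
    rw [hMcomp]
    exact mul_ne_zero (C_ne_zero.2 hc0) (pow_ne_zero _ hD0)
  have hMD_deg : (M.comp D).natDegree = A.natDegree := by
    rw [hMcomp, natDegree_C_mul hc0, natDegree_pow, hjA, hjD, he, ← pow_add, ← Nat.mul_add,
      Nat.sub_add_cancel hjDA]
  have hMD_lc : (M.comp D).leadingCoeff = A.leadingCoeff := by
    rw [hMcomp, leadingCoeff_mul, leadingCoeff_C, leadingCoeff_pow, hc, mul_assoc,
      inv_mul_cancel₀ (pow_ne_zero _ hDlc), mul_one]
  have hMlin : IsLin q r M := isLin_C_mul_X_pow c (jA - jD)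
  have hMDlin : IsLin q r (M.comp D) := by
    rw [hMcomp]; exact isLin_C_mul _ (isLin_pow p k hq hD (jA - jD))
  have hdlt : (A - M.comp D).degree < A.degree := by
    refine degree_sub_lt ?_ h0 hMD_lc.symm
    rw [degree_eq_natDegree h0, degree_eq_natDegree hMD0, hMD_deg]
  by_cases h0' : A - M.comp D = 0
  · exact ⟨M, 0, hMlin, isLin_zero, by rw [add_zero, ← sub_eq_zero, h0'], Or.inl rfl⟩
  · have hdeg' : (A - M.comp D).natDegree < N := hN ▸ natDegree_lt_natDegree h0' hdlt
    obtain ⟨Q', R', hQ', hR', heq, hsz⟩ := ih _ hdeg' (isLin_sub hA hMDlin) rfl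
    refine ⟨M + Q', R', isLin_add hMlin hQ', hR', ?_, hsz⟩
    rw [add_comp]
    have : A = M.comp D + (A - M.comp D) := by ring
    rw [this, heq]; ring

theorem lin_gcd (hq2 : 2 ≤ q) (hr : 0 < r) (A B : Polynomial F) (hA : IsLin q r A)
    (hB : IsLin q r B) :
    ∃ D U V, IsLin q r D ∧ IsLin q r U ∧ IsLin q r V ∧ D = U.comp A + V.comp B ∧
      SymDvdR q r D A ∧ SymDvdR q r D B := by
  generalize hN : B.natDegree = N
  induction N using Nat.strong_induction_on generalizing A B with
  | _ N ih =>
  by_cases hB0 : B = 0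
  · exact ⟨A, X, 0, hA, isLin_X, isLin_zero, by simp, ⟨X, isLin_X, (X_comp).symm⟩,
      ⟨0, isLin_zero, by rw [hB0, zero_comp]⟩⟩
  obtain ⟨Q, R, hQ, hR, hAeq, hRsz⟩ := lin_div p k hq hq2 hr hA hB hB0
  by_cases hR0 : R = 0
  · refine ⟨B, 0, X, hB, isLin_zero, isLin_X, by simp, ⟨Q, hQ, ?_⟩, ⟨X, isLin_X, (X_comp).symm⟩⟩
    rw [hAeq, hR0, add_zero]
  have hRlt : R.natDegree < N := hN ▸ (hRsz.resolve_left hR0)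
  obtain ⟨D, U, V, hD, hU, hV, hDeq, ⟨S, hS, hSeq⟩, ⟨T, hT, hTeq⟩⟩ := ih _ hRlt B R hB hR rfl
  have hReq : R = A - Q.comp B := by rw [hAeq]; ring
  refine ⟨D, V, U - V.comp Q, hD, hV, isLin_sub hU (isLin_comp p k hq hV hQ), ?_, ?_, ⟨S, hS, hSeq⟩⟩
  · rw [sub_comp, hDeq, hReq, lin_comp_sub p k hq hV, ← comp_assoc]
    ring
  · refine ⟨Q.comp S + T, isLin_add (isLin_comp p k hq hQ hS) hT, ?_⟩
    rw [add_comp, comp_assoc, ← hSeq, ← hTeq, hAeq]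

omit [Fact p.Prime] [CharP F p] hq in
theorem W_isLin (n : ℕ) : IsLin q r (X ^ q ^ (r * n) - X : Polynomial F) := by
  refine isLin_sub ?_ isLin_X
  have h : (X : Polynomial F) ^ q ^ (r * n) = C 1 * X ^ q ^ (r * n) := by rw [C_1, one_mul]
  exact h ▸ isLin_C_mul_X_pow 1 n

omit [Fact p.Prime] [CharP F p] hq in
theorem W_deg_pos (hq2 : 2 ≤ q) (hr : 0 < r) (n : ℕ) (hn : 0 < n) : 2 ≤ q ^ (r * n) := by
  calc 2 ≤ q := hq2
  _ = q ^ 1 := (pow_one q).symm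
  _ ≤ q ^ (r * n) := Nat.pow_le_pow_right (by omega) (Nat.mul_pos hr hn)

omit [Fact p.Prime] [CharP F p] hq in
theorem W_monic (hq2 : 2 ≤ q) (hr : 0 < r) (n : ℕ) (hn : 0 < n) :
    (X ^ q ^ (r * n) - X : Polynomial F).Monic := by
  refine monic_X_pow_sub ?_
  have h2 : 2 ≤ q ^ (r * n) := W_deg_pos hq2 hr n hn
  rw [degree_X]
  exact_mod_cast Nat.lt_of_lt_of_le one_lt_two h2

omit [Fact p.Prime] [CharP F p] hq in
theorem W_natDegree (hq2 : 2 ≤ q) (hr : 0 < r) (n : ℕ) (hn : 0 < n) :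
    (X ^ q ^ (r * n) - X : Polynomial F).natDegree = q ^ (r * n) := by
  rw [natDegree_sub_eq_left_of_natDegree_lt, natDegree_X_pow]
  rw [natDegree_X, natDegree_X_pow]
  have := W_deg_pos (q := q) hq2 hr n hn; omega

omit [Fact p.Prime] [CharP F p] hq in
theorem W_ne_zero (hq2 : 2 ≤ q) (hr : 0 < r) (n : ℕ) (hn : 0 < n) :
    (X ^ q ^ (r * n) - X : Polynomial F) ≠ 0 :=
  (W_monic hq2 hr n hn).ne_zero

/-- Ordinary divisibility by `W` of a linearized polynomial gives symbolic divisibility. -/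
theorem lin_W_dvd (hq2 : 2 ≤ q) (hr : 0 < r) (n : ℕ) (hn : 0 < n) {P : Polynomial F}
    (hP : IsLin q r P) (hdvd : (X ^ q ^ (r * n) - X : Polynomial F) ∣ P) :
    ∃ S, IsLin q r S ∧ P = S.comp (X ^ q ^ (r * n) - X : Polynomial F) := by
  obtain ⟨S, R, hS, hR, heq, hsz⟩ :=
    lin_div p k hq hq2 hr hP (W_isLin (q := q) (r := r) n) (W_ne_zero hq2 hr n hn)
  have hWR : (X ^ q ^ (r * n) - X : Polynomial F) ∣ R := by
    have h1 : (X ^ q ^ (r * n) - X : Polynomial F) ∣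
        S.comp (X ^ q ^ (r * n) - X : Polynomial F) := dvd_lin_comp (by omega) hS _
    have : R = P - S.comp (X ^ q ^ (r * n) - X : Polynomial F) := by rw [heq]; ring
    rw [this]
    exact dvd_sub hdvd h1
  have hR0 : R = 0 := by
    by_contra hne
    have hlt : R.degree < (X ^ q ^ (r * n) - X : Polynomial F).degree := by
      rw [degree_eq_natDegree hne, degree_eq_natDegree (W_ne_zero hq2 hr n hn)]
      exact_mod_cast hsz.resolve_left hne
    exact hne (eq_zero_of_dvd_of_degree_lt hWR hlt)
  exact ⟨S, hS, by rw [heq, hR0, add_zero]⟩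

section Code

variable {n : ℕ} [NeZero n] {CC : Submodule F (Fin n → F)}

omit [Fact p.Prime] [CharP F p] hq in
theorem fin_add_one_val (j : Fin n) :
    ((j + 1 : Fin n) : ℕ) = if (j : ℕ) + 1 = n then 0 else (j : ℕ) + 1 := by
  rw [Fin.val_add, Fin.val_one']
  rcases Nat.lt_or_ge 1 n with h | h
  · rw [Nat.mod_eq_of_lt h]
    by_cases hj : (j : ℕ) + 1 = n
    · simp [hj]
    · have hlt : (j : ℕ) + 1 < n := by have := j.isLt; omega
      rw [if_neg hj, Nat.mod_eq_of_lt hlt]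
  · have hn1 : n = 1 := by have := Nat.pos_of_ne_zero (NeZero.ne n); omega
    subst hn1
    have h0 : (j : ℕ) = 0 := by have := j.isLt; omega
    simp [h0]

omit [Fact p.Prime] [CharP F p] hq in
theorem classEq_refl (P : Polynomial F) : ClassEq q r n P P := by simp [ClassEq]

omit [Fact p.Prime] [CharP F p] hq in
theorem classEq_trans {P Q R : Polynomial F} (h1 : ClassEq q r n P Q) (h2 : ClassEq q r n Q R) :
    ClassEq q r n P R := by
  have h3 : P - R = (P - Q) + (Q - R) := by ring
  show _ ∣ (P - R)
  rw [h3]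
  exact dvd_add h1 h2

omit [Fact p.Prime] [CharP F p] hq in
theorem memCx_classEq {P P' : Polynomial F} (h : ClassEq q r n P P')
    (hM : MemCx q r n (CC : Set (Fin n → F)) P') : MemCx q r n (CC : Set (Fin n → F)) P := by
  obtain ⟨v, hv, hcl⟩ := hM
  exact ⟨v, hv, classEq_trans h hcl⟩

omit [Fact p.Prime] [CharP F p] hq in
theorem vecPoly_add (v w : Fin n → F) :
    vecPoly q r n (v + w) = vecPoly q r n v + vecPoly q r n w := by
  simp [vecPoly, C_add, add_mul, Finset.sum_add_distrib]

omit [Fact p.Prime] [CharP F p] hq in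
theorem vecPoly_C_mul (c : F) (v : Fin n → F) :
    vecPoly q r n (c • v) = C c * vecPoly q r n v := by
  simp [vecPoly, C_mul, mul_assoc, Finset.mul_sum]

omit [Fact p.Prime] [CharP F p] hq in
theorem memCx_zero : MemCx q r n (CC : Set (Fin n → F)) 0 :=
  ⟨0, CC.zero_mem, by simp [ClassEq, vecPoly]⟩

omit [Fact p.Prime] [CharP F p] hq in
theorem memCx_add {P P' : Polynomial F} (h : MemCx q r n (CC : Set (Fin n → F)) P)
    (h' : MemCx q r n (CC : Set (Fin n → F)) P') :
    MemCx q r n (CC : Set (Fin n → F)) (P + P') := by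
  obtain ⟨v, hv, hcl⟩ := h
  obtain ⟨w, hw, hcl'⟩ := h'
  refine ⟨v + w, CC.add_mem hv hw, ?_⟩
  rw [ClassEq, vecPoly_add]
  have h3 : P + P' - (vecPoly q r n v + vecPoly q r n w)
      = (P - vecPoly q r n v) + (P' - vecPoly q r n w) := by ring
  exact h3 ▸ dvd_add hcl hcl'

omit [Fact p.Prime] [CharP F p] hq in
theorem memCx_C_mul (c : F) {P : Polynomial F} (h : MemCx q r n (CC : Set (Fin n → F)) P) :
    MemCx q r n (CC : Set (Fin n → F)) (C c * P) := by
  obtain ⟨v, hv, hcl⟩ := h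
  refine ⟨c • v, CC.smul_mem c hv, ?_⟩
  rw [ClassEq, vecPoly_C_mul, ← mul_sub]
  exact hcl.mul_left _

omit [Fact p.Prime] [CharP F p] hq in
theorem memCx_sub {P P' : Polynomial F} (h : MemCx q r n (CC : Set (Fin n → F)) P)
    (h' : MemCx q r n (CC : Set (Fin n → F)) P') :
    MemCx q r n (CC : Set (Fin n → F)) (P - P') := by
  have hn : MemCx q r n (CC : Set (Fin n → F)) (C (-1) * P') := memCx_C_mul (-1) h'
  rw [map_neg, C_1, neg_one_mul] at hn
  simpa [sub_eq_add_neg] using memCx_add h hn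

theorem vecPoly_pow (v : Fin n → F) :
    (vecPoly q r n v) ^ q ^ r = ∑ i : Fin n, C (v i ^ q ^ r) * X ^ q ^ (r * (i : ℕ) + r) := by
  have hqr : q ^ r = p ^ (k * r) := pow_exp p k hq r
  rw [vecPoly, hqr]
  calc (∑ i : Fin n, C (v i) * X ^ q ^ (r * (i : ℕ))) ^ p ^ (k * r)
      = iterateFrobenius (Polynomial F) p (k * r)
          (∑ i : Fin n, C (v i) * X ^ q ^ (r * (i : ℕ))) := by rw [iterateFrobenius_def]
    _ = ∑ i : Fin n, (C (v i) * X ^ q ^ (r * (i : ℕ))) ^ p ^ (k * r) := by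
        rw [map_sum]; simp [iterateFrobenius_def]
    _ = _ := by
        refine Finset.sum_congr rfl fun i _ => ?_
        rw [mul_pow, ← C_pow, ← pow_mul, ← hqr, ← pow_add]

theorem vecPoly_shift (v : Fin n → F) :
    ClassEq q r n ((vecPoly q r n v) ^ q ^ r)
      (vecPoly q r n (fun i => v (i - 1) ^ q ^ r)) := by
  have hre : vecPoly q r n (fun i => v (i - 1) ^ q ^ r)
      = ∑ j : Fin n, C (v j ^ q ^ r) * X ^ q ^ (r * ((j + 1 : Fin n) : ℕ)) := by
    rw [vecPoly]
    refine (Fintype.sum_equiv (Equiv.addRight 1) _ _ fun j => ?_).symm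
    simp [Equiv.coe_addRight]
  rw [ClassEq, vecPoly_pow p k hq, hre, ← Finset.sum_sub_distrib]
  refine Finset.dvd_sum fun j _ => ?_
  rw [← mul_sub]
  by_cases hj : (j : ℕ) + 1 = n
  · have hval : ((j + 1 : Fin n) : ℕ) = 0 := by rw [fin_add_one_val, if_pos hj]
    have hexp : r * (j : ℕ) + r = r * n := by
      calc r * (j : ℕ) + r = r * ((j : ℕ) + 1) := by ring
        _ = r * n := by rw [hj]
    rw [hval, hexp, Nat.mul_zero, pow_zero, pow_one]
    exact (dvd_refl _).mul_left _
  · have hval : ((j + 1 : Fin n) : ℕ) = (j : ℕ) + 1 := by rw [fin_add_one_val, if_neg hj]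
    have hexp : r * (j : ℕ) + r = r * ((j : ℕ) + 1) := by ring
    rw [hval, hexp, sub_self, mul_zero]
    exact dvd_zero _

theorem memCx_shift (hC : IsQrCyclic q r n (CC : Set (Fin n → F))) {P : Polynomial F}
    (hM : MemCx q r n (CC : Set (Fin n → F)) P) :
    MemCx q r n (CC : Set (Fin n → F)) (P ^ q ^ r) := by
  obtain ⟨v, hv, hcl⟩ := hM
  refine ⟨fun i => v (i - 1) ^ q ^ r, hC v hv, ?_⟩
  have h1 : ClassEq q r n (P ^ q ^ r) ((vecPoly q r n v) ^ q ^ r) := by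
    rw [ClassEq]
    have h2 : P ^ q ^ r - (vecPoly q r n v) ^ q ^ r = (P - vecPoly q r n v) ^ q ^ r := by
      rw [pow_exp p k hq r, sub_pow_char_pow]
    rw [h2]
    have hq0 : q ^ r ≠ 0 := by
      have hp : 0 < p := (Fact.out : p.Prime).pos
      rw [hq]; positivity
    exact dvd_pow hcl hq0
  exact classEq_trans h1 (vecPoly_shift p k hq v)

theorem memCx_qpow (hC : IsQrCyclic q r n (CC : Set (Fin n → F))) {P : Polynomial F}
    (hM : MemCx q r n (CC : Set (Fin n → F)) P) (j : ℕ) :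
    MemCx q r n (CC : Set (Fin n → F)) (P ^ q ^ (r * j)) := by
  induction j with
  | zero => simpa using hM
  | succ j ih =>
      have h2 : P ^ q ^ (r * (j + 1)) = (P ^ q ^ (r * j)) ^ q ^ r := by
        rw [← pow_mul, ← pow_add, Nat.mul_add, Nat.mul_one]
      rw [h2]
      exact memCx_shift p k hq hC ih

theorem memCx_comp (hC : IsQrCyclic q r n (CC : Set (Fin n → F))) {Q P : Polynomial F}
    (hQ : IsLin q r Q) (hM : MemCx q r n (CC : Set (Fin n → F)) P) :
    MemCx q r n (CC : Set (Fin n → F)) (Q.comp P) := by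
  rw [comp_eq_sum_left, sum_def]
  have key : ∀ s : Finset ℕ, (∀ i ∈ s, ∃ j, i = q ^ (r * j)) →
      MemCx q r n (CC : Set (Fin n → F)) (∑ i ∈ s, C (Q.coeff i) * P ^ i) := by
    intro s
    induction s using Finset.induction with
    | empty => intro _; simpa using memCx_zero (CC := CC)
    | @insert a s ha ih =>
        intro hs
        rw [Finset.sum_insert ha]
        obtain ⟨j, rfl⟩ := hs a (Finset.mem_insert_self a s)
        exact memCx_add (memCx_C_mul _ (memCx_qpow p k hq hC hM j))
          (ih fun i hi => hs i (Finset.mem_insert_of_mem hi))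
  exact key Q.support hQ

theorem lin_memCx_iff_dvdG (hq2 : 2 ≤ q) (hr : 0 < r)
    (hC : IsQrCyclic q r n (CC : Set (Fin n → F)))
    {G : Polynomial F} (hG : IsMinGen q r n (CC : Set (Fin n → F)) G)
    {P : Polynomial F} (hP : IsLin q r P) :
    MemCx q r n (CC : Set (Fin n → F)) P ↔ SymDvdR q r G P := by
  constructor
  · intro hM
    have hG0 : G ≠ 0 := hG.2.1.ne_zero
    obtain ⟨Q, R, hQ, hR, heq, hsz⟩ := lin_div p k hq hq2 hr hP hG.1 hG0
    have hMR : MemCx q r n (CC : Set (Fin n → F)) R := by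
      have h1 : R = P - Q.comp G := by rw [heq]; ring
      rw [h1]
      exact memCx_sub hM (memCx_comp p k hq hC hQ hG.2.2.1)
    have hR0 : R = 0 := by
      by_contra hne
      have hlc : R.leadingCoeff ≠ 0 := leadingCoeff_ne_zero.2 hne
      have hmono : (C R.leadingCoeff⁻¹ * R).Monic := by
        show (C R.leadingCoeff⁻¹ * R).leadingCoeff = 1
        rw [leadingCoeff_mul, leadingCoeff_C, inv_mul_cancel₀ hlc]
      have hmin := hG.2.2.2 (C R.leadingCoeff⁻¹ * R) (isLin_C_mul _ hR) hmono
        (memCx_C_mul _ hMR)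
      rw [natDegree_C_mul (inv_ne_zero hlc)] at hmin
      have := hsz.resolve_left hne
      omega
    exact ⟨Q, hQ, by rw [heq, hR0, add_zero]⟩
  · rintro ⟨Q, hQ, rfl⟩
    exact memCx_comp p k hq hC hQ hG.2.2.1

omit [Fact p.Prime] [CharP F p] hq in
theorem memCx_W (hn : 0 < n) :
    MemCx q r n (CC : Set (Fin n → F)) (X ^ q ^ (r * n) - X : Polynomial F) := by
  refine memCx_classEq ?_ (memCx_zero (CC := CC))
  show _ ∣ _
  simp

theorem G_symDvd_W (hq2 : 2 ≤ q) (hr : 0 < r) (hn : 0 < n)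
    (hC : IsQrCyclic q r n (CC : Set (Fin n → F)))
    {G : Polynomial F} (hG : IsMinGen q r n (CC : Set (Fin n → F)) G) :
    SymDvdR q r G (X ^ q ^ (r * n) - X : Polynomial F) :=
  (lin_memCx_iff_dvdG p k hq hq2 hr hC hG (W_isLin n)).1 (memCx_W hn)

end Code

section Roots

variable {K : Type*} [Field K] [Algebra F K]

omit [Fact p.Prime] [CharP F p] hq in
theorem aeval_lin_zero (hq1 : 0 < q) {Q : Polynomial F} (hQ : IsLin q r Q) :
    aeval (0 : K) Q = 0 := by
  rw [aeval_def, eval₂_at_zero, lin_coeff_zero hq1 hQ, map_zero]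

omit [Fact p.Prime] [CharP F p] hq in
theorem zset_mono (hq1 : 0 < q) {E P : Polynomial F} (h : SymDvdR q r E P) :
    ZSet K E ⊆ ZSet K P := by
  obtain ⟨Q, hQ, rfl⟩ := h
  intro β hβ
  have hβ' : aeval β E = 0 := hβ
  show aeval β (Q.comp E) = 0
  rw [aeval_comp, hβ', aeval_lin_zero hq1 hQ]

omit [Fact p.Prime] [CharP F p] hq in
theorem aeval_W_eq_zero [Fintype K] {nn : ℕ} (hcardK : Fintype.card K = q ^ (r * nn)) (β : K) :
    aeval β (X ^ q ^ (r * nn) - X : Polynomial F) = 0 := by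
  rw [map_sub, map_pow, aeval_X, ← hcardK, FiniteField.pow_card, sub_self]

omit [Fact p.Prime] [CharP F p] hq in
theorem lin_vanish_eq_zero (hq2 : 2 ≤ q) (hr : 0 < r) {nn : ℕ} (hn : 0 < nn) [Fintype K]
    (hcardK : Fintype.card K = q ^ (r * nn)) {E R : Polynomial F} (hE0 : E ≠ 0)
    (hEdvd : E ∣ (X ^ q ^ (r * nn) - X : Polynomial F))
    (hRdeg : R.natDegree < E.natDegree)
    (hvan : ∀ β : K, aeval β E = 0 → aeval β R = 0) : R = 0 := by
  classical
  by_contra hR0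
  set f := algebraMap F K
  have hfinj : Function.Injective f := f.injective
  have hmapW : (X ^ q ^ (r * nn) - X : Polynomial F).map f
      = (X ^ q ^ (r * nn) - X : Polynomial K) := by
    simp [Polynomial.map_sub, Polynomial.map_pow, Polynomial.map_X]
  have hWK0 : (X ^ q ^ (r * nn) - X : Polynomial K) ≠ 0 :=
    W_ne_zero (q := q) hq2 hr nn hn
  -- all elements of K are roots of W
  have hWroots : ∀ β : K, β ∈ (X ^ q ^ (r * nn) - X : Polynomial K).roots := by
    intro β
    rw [mem_roots hWK0]
    show eval β _ = 0
    rw [eval_sub, eval_pow, eval_X, ← hcardK, FiniteField.pow_card, sub_self]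
  have hWdeg : (X ^ q ^ (r * nn) - X : Polynomial K).natDegree = q ^ (r * nn) :=
    W_natDegree hq2 hr nn hn
  have hWcard_le : Multiset.card (X ^ q ^ (r * nn) - X : Polynomial K).roots ≤ q ^ (r * nn) := by
    have h := card_roots' (X ^ q ^ (r * nn) - X : Polynomial K)
    rwa [hWdeg] at h
  have huniv : (Finset.univ : Finset K)
      ⊆ (X ^ q ^ (r * nn) - X : Polynomial K).roots.toFinset := by
    intro β _
    rw [Multiset.mem_toFinset]
    exact hWroots β
  have hWcard_ge : q ^ (r * nn)
      ≤ (X ^ q ^ (r * nn) - X : Polynomial K).roots.toFinset.card := by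
    have h := Finset.card_le_card huniv
    rwa [Finset.card_univ, hcardK] at h
  have hWnodup : (X ^ q ^ (r * nn) - X : Polynomial K).roots.Nodup := by
    refine Multiset.toFinset_card_eq_card_iff_nodup.mp ?_
    have h := Multiset.toFinset_card_le (m := (X ^ q ^ (r * nn) - X : Polynomial K).roots)
    omega
  obtain ⟨H, hH⟩ := hEdvd
  have hH0 : H ≠ 0 := by
    intro h; rw [h, mul_zero] at hH; exact hWK0 (by rw [← hmapW, hH, Polynomial.map_zero])
  have hmapmul : (X ^ q ^ (r * nn) - X : Polynomial K) = E.map f * H.map f := by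
    rw [← Polynomial.map_mul, ← hH, hmapW]
  have hE0' : E.map f ≠ 0 := by
    simpa using (Polynomial.map_ne_zero_iff hfinj).2 hE0
  have hH0' : H.map f ≠ 0 := by
    simpa using (Polynomial.map_ne_zero_iff hfinj).2 hH0
  have hrootsmul : (X ^ q ^ (r * nn) - X : Polynomial K).roots
      = (E.map f).roots + (H.map f).roots := by
    rw [hmapmul]
    exact roots_mul (by rw [← hmapmul]; exact hWK0)
  -- card of roots of E.map f equals its natDegree
  have hdegsum : (E.map f).natDegree + (H.map f).natDegree = q ^ (r * nn) := by
    rw [← hWdeg, hmapmul, natDegree_mul hE0' hH0']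
  have hcards : Multiset.card (E.map f).roots + Multiset.card (H.map f).roots = q ^ (r * nn) := by
    have h1 := card_roots' (E.map f)
    have h2 := card_roots' (H.map f)
    have h3 : Multiset.card (E.map f).roots + Multiset.card (H.map f).roots
        = Multiset.card (X ^ q ^ (r * nn) - X : Polynomial K).roots := by
      rw [hrootsmul, Multiset.card_add]
    have h4 : q ^ (r * nn) ≤ Multiset.card (X ^ q ^ (r * nn) - X : Polynomial K).roots := by
      have h5 := Multiset.toFinset_card_le (m := (X ^ q ^ (r * nn) - X : Polynomial K).roots)
      omega
    omega
  have hEcard : Multiset.card (E.map f).roots = E.natDegree := by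
    have h1 := card_roots' (E.map f)
    have h2 := card_roots' (H.map f)
    rw [natDegree_map] at h1 h2
    have := hdegsum
    rw [natDegree_map, natDegree_map] at this
    omega
  have hEnodup : (E.map f).roots.Nodup := by
    have h := hWnodup
    rw [hrootsmul] at h
    exact Multiset.nodup_of_le (Multiset.le_add_right _ _) h
  -- every root of E.map f is a root of R.map f
  have hR0' : R.map f ≠ 0 := (Polynomial.map_ne_zero_iff hfinj).2 hR0
  have hsub : (E.map f).roots.toFinset ⊆ (R.map f).roots.toFinset := by
    intro β hβ
    rw [Multiset.mem_toFinset, mem_roots hE0'] at hβ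
    rw [Multiset.mem_toFinset, mem_roots hR0']
    have hβ' : aeval β E = 0 := by
      rw [aeval_def, ← eval_map]; exact hβ
    show eval β (R.map f) = 0
    rw [eval_map, ← aeval_def]
    exact hvan β hβ'
  have hcount : E.natDegree ≤ R.natDegree := by
    calc E.natDegree = Multiset.card (E.map f).roots := hEcard.symm
      _ = (E.map f).roots.toFinset.card := (Multiset.toFinset_card_of_nodup hEnodup).symm
      _ ≤ (R.map f).roots.toFinset.card := Finset.card_le_card hsub
      _ ≤ Multiset.card (R.map f).roots := Multiset.toFinset_card_le _
      _ ≤ (R.map f).natDegree := card_roots' _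
      _ = R.natDegree := natDegree_map f
  omega

end Roots

end Char

end St2

/-- For an `F_{q^m}`-linear `q^r`-cyclic code `C` with minimal generator
`G` and root space `T = Z(G)`, and a `q^r`-polynomial `G̃`, the following are equivalent:
(i) the class of `G̃` generates `C(x)` as a left ideal; (ii) `Z(G̃) = T`;
(iii) `G` is a greatest common right divisor (w.r.t. the symbolic product) of `G̃` and
`x^{q^{rn}} - x`. -/
theorem statement2
    (q m n r : ℕ) (hq : IsPrimePow q) (hm : 0 < m) (hr : 0 < r) [NeZero n]
    (hmn : m ∣ r * n)
    (Fqm Fqr K : Type*) [Field Fqm] [Fintype Fqm] [Field Fqr] [Fintype Fqr]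
    [Field K] [Fintype K] [Algebra Fqm K] [Algebra Fqr K]
    (hcardm : Fintype.card Fqm = q ^ m) (hcardr : Fintype.card Fqr = q ^ r)
    (hcardK : Fintype.card K = q ^ (r * n))
    (C : Submodule Fqm (Fin n → Fqm))
    (hC : IsQrCyclic q r n (C : Set (Fin n → Fqm)))
    (G : Polynomial Fqm) (hG : IsMinGen q r n (C : Set (Fin n → Fqm)) G)
    (T : Set K) (hT : T = ZSet K G)
    (Gt : Polynomial Fqm) (hGt : IsLin q r Gt) :
    ((∀ P : Polynomial Fqm, IsLin q r P →
        (MemCx q r n (C : Set (Fin n → Fqm)) P ↔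
          ∃ Q : Polynomial Fqm, IsLin q r Q ∧ ClassEq q r n P (Q.comp Gt))) ↔
      ZSet K Gt = T) ∧
    ((∀ P : Polynomial Fqm, IsLin q r P →
        (MemCx q r n (C : Set (Fin n → Fqm)) P ↔
          ∃ Q : Polynomial Fqm, IsLin q r Q ∧ ClassEq q r n P (Q.comp Gt))) ↔
      (SymDvdR q r G Gt ∧
        SymDvdR q r G (Polynomial.X ^ q ^ (r * n) - Polynomial.X) ∧
        ∀ E : Polynomial Fqm, IsLin q r E → SymDvdR q r E Gt →
          SymDvdR q r E (Polynomial.X ^ q ^ (r * n) - Polynomial.X) → SymDvdR q r E G)) := by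
  classical
  have hq2 : 2 ≤ q := hq.two_le
  have hq1 : 0 < q := by omega
  have hn : 0 < n := Nat.pos_of_ne_zero (NeZero.ne n)
  obtain ⟨p, k, hp, hk, hqpk⟩ := hq
  haveI : Fact p.Prime := ⟨Nat.prime_iff.mpr hp⟩
  have hqeq : q = p ^ k := hqpk.symm
  haveI : CharP Fqm p := by
    obtain ⟨n', hp', hcard'⟩ := FiniteField.card Fqm (ringChar Fqm)
    have heq : (ringChar Fqm) ^ (n' : ℕ) = p ^ (k * m) := by
      rw [← hcard', hcardm, hqeq, ← pow_mul]
    have hdvd : ringChar Fqm ∣ p := by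
      have h1 : ringChar Fqm ∣ p ^ (k * m) := heq ▸ dvd_pow_self _ n'.pos.ne'
      exact hp'.dvd_of_dvd_pow h1
    have hpe : ringChar Fqm = p := (Nat.prime_dvd_prime_iff_eq hp' (Nat.prime_iff.mpr hp)).mp hdvd
    exact hpe ▸ ringChar.charP Fqm
  have memiff : ∀ P : Polynomial Fqm, IsLin q r P →
      (MemCx q r n (C : Set (Fin n → Fqm)) P ↔ SymDvdR q r G P) :=
    fun P hP => St2.lin_memCx_iff_dvdG p k hqeq hq2 hr hC hG hP
  have hG0 : G ≠ 0 := hG.2.1.ne_zero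
  have hGW : SymDvdR q r G (Polynomial.X ^ q ^ (r * n) - Polynomial.X : Polynomial Fqm) :=
    St2.G_symDvd_W p k hqeq hq2 hr hn hC hG
  have hGdvdW : G ∣ (Polynomial.X ^ q ^ (r * n) - Polynomial.X : Polynomial Fqm) := by
    obtain ⟨B, hB, hBeq⟩ := hGW
    exact hBeq ▸ St2.dvd_lin_comp hq1 hB G
  have bez : ∃ D U V : Polynomial Fqm, IsLin q r D ∧ IsLin q r U ∧ IsLin q r V ∧
      D = U.comp Gt + V.comp (Polynomial.X ^ q ^ (r * n) - Polynomial.X : Polynomial Fqm) ∧ SymDvdR q r D Gt ∧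
      SymDvdR q r D (Polynomial.X ^ q ^ (r * n) - Polynomial.X : Polynomial Fqm) :=
    St2.lin_gcd p k hqeq hq2 hr Gt _ hGt (St2.W_isLin n)
  -- (i) → (iii)
  have h13 : (∀ P : Polynomial Fqm, IsLin q r P →
        (MemCx q r n (C : Set (Fin n → Fqm)) P ↔
          ∃ Q : Polynomial Fqm, IsLin q r Q ∧ ClassEq q r n P (Q.comp Gt))) →
      (SymDvdR q r G Gt ∧ SymDvdR q r G (Polynomial.X ^ q ^ (r * n) - Polynomial.X : Polynomial Fqm) ∧
        ∀ E : Polynomial Fqm, IsLin q r E → SymDvdR q r E Gt →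
          SymDvdR q r E (Polynomial.X ^ q ^ (r * n) - Polynomial.X : Polynomial Fqm) → SymDvdR q r E G) := by
    intro hI
    refine ⟨?_, hGW, ?_⟩
    · refine (memiff Gt hGt).1 ?_
      refine (hI Gt hGt).2 ⟨Polynomial.X, St2.isLin_X, ?_⟩
      rw [Polynomial.X_comp]
      exact St2.classEq_refl Gt
    · rintro E hE ⟨A, hA, hAeq⟩ ⟨B, hB, hBeq⟩
      obtain ⟨Q, hQ, hcl⟩ := (hI G hG.1).1 hG.2.2.1
      obtain ⟨S, hS, hSeq⟩ := St2.lin_W_dvd p k hqeq hq2 hr n hn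
        (St2.isLin_sub hG.1 (St2.isLin_comp p k hqeq hQ hGt)) hcl
      refine ⟨Q.comp A + S.comp B, St2.isLin_add (St2.isLin_comp p k hqeq hQ hA)
        (St2.isLin_comp p k hqeq hS hB), ?_⟩
      have hGeq : G = Q.comp Gt + S.comp (Polynomial.X ^ q ^ (r * n) - Polynomial.X : Polynomial Fqm) := by
        rw [← hSeq]; ring
      rw [hGeq, hAeq, hBeq, Polynomial.add_comp, Polynomial.comp_assoc, Polynomial.comp_assoc]
  -- (iii) → (i)
  have h31 : (SymDvdR q r G Gt ∧ SymDvdR q r G (Polynomial.X ^ q ^ (r * n) - Polynomial.X : Polynomial Fqm) ∧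
        ∀ E : Polynomial Fqm, IsLin q r E → SymDvdR q r E Gt →
          SymDvdR q r E (Polynomial.X ^ q ^ (r * n) - Polynomial.X : Polynomial Fqm) → SymDvdR q r E G) →
      (∀ P : Polynomial Fqm, IsLin q r P →
        (MemCx q r n (C : Set (Fin n → Fqm)) P ↔
          ∃ Q : Polynomial Fqm, IsLin q r Q ∧ ClassEq q r n P (Q.comp Gt))) := by
    rintro ⟨⟨A0, hA0, hA0eq⟩, _, hmax⟩
    obtain ⟨D, U, V, hD, hU, hV, hDeq, hDGt, hDW⟩ := bez
    obtain ⟨H, hH, hHeq⟩ := hmax D hD hDGt hDW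
    have hGbez : G = (H.comp U).comp Gt + (H.comp V).comp (Polynomial.X ^ q ^ (r * n) - Polynomial.X : Polynomial Fqm) := by
      rw [hHeq, hDeq, St2.lin_comp_add p k hqeq hH, Polynomial.comp_assoc,
        Polynomial.comp_assoc]
    intro P hP
    rw [memiff P hP]
    constructor
    · rintro ⟨Q0, hQ0, rfl⟩
      refine ⟨Q0.comp (H.comp U),
        St2.isLin_comp p k hqeq hQ0 (St2.isLin_comp p k hqeq hH hU), ?_⟩
      show (Polynomial.X ^ q ^ (r * n) - Polynomial.X : Polynomial Fqm) ∣ _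
      have hPe : Q0.comp G = (Q0.comp (H.comp U)).comp Gt
          + (Q0.comp (H.comp V)).comp (Polynomial.X ^ q ^ (r * n) - Polynomial.X : Polynomial Fqm) := by
        conv_lhs => rw [hGbez]
        rw [St2.lin_comp_add p k hqeq hQ0]
        simp only [Polynomial.comp_assoc]
      have h2 : Q0.comp G - (Q0.comp (H.comp U)).comp Gt
          = (Q0.comp (H.comp V)).comp (Polynomial.X ^ q ^ (r * n) - Polynomial.X : Polynomial Fqm) := by
        rw [hPe]; ring
      rw [h2]
      exact St2.dvd_lin_comp hq1
        (St2.isLin_comp p k hqeq hQ0 (St2.isLin_comp p k hqeq hH hV)) _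
    · rintro ⟨Q, hQ, hcl⟩
      obtain ⟨S, hS, hSeq⟩ := St2.lin_W_dvd p k hqeq hq2 hr n hn
        (St2.isLin_sub hP (St2.isLin_comp p k hqeq hQ hGt)) hcl
      obtain ⟨B0, hB0, hB0eq⟩ := hGW
      refine ⟨Q.comp A0 + S.comp B0, St2.isLin_add (St2.isLin_comp p k hqeq hQ hA0)
        (St2.isLin_comp p k hqeq hS hB0), ?_⟩
      have hPeq : P = Q.comp Gt + S.comp (Polynomial.X ^ q ^ (r * n) - Polynomial.X : Polynomial Fqm) := by
        rw [← hSeq]; ring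
      rw [hPeq, hA0eq, hB0eq, Polynomial.add_comp, Polynomial.comp_assoc, Polynomial.comp_assoc]
  -- (iii) → (ii)
  have h32 : (SymDvdR q r G Gt ∧ SymDvdR q r G (Polynomial.X ^ q ^ (r * n) - Polynomial.X : Polynomial Fqm) ∧
        ∀ E : Polynomial Fqm, IsLin q r E → SymDvdR q r E Gt →
          SymDvdR q r E (Polynomial.X ^ q ^ (r * n) - Polynomial.X : Polynomial Fqm) → SymDvdR q r E G) →
      ZSet K Gt = T := by
    rintro ⟨hGGt, _, hmax⟩
    rw [hT]
    refine Set.Subset.antisymm ?_ (St2.zset_mono hq1 hGGt)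
    obtain ⟨D, U, V, hD, hU, hV, hDeq, hDGt, hDW⟩ := bez
    obtain ⟨H, hH, hHeq⟩ := hmax D hD hDGt hDW
    have hGbez : G = (H.comp U).comp Gt + (H.comp V).comp (Polynomial.X ^ q ^ (r * n) - Polynomial.X : Polynomial Fqm) := by
      rw [hHeq, hDeq, St2.lin_comp_add p k hqeq hH, Polynomial.comp_assoc,
        Polynomial.comp_assoc]
    intro β hβ
    have hβ' : Polynomial.aeval β Gt = 0 := hβ
    show Polynomial.aeval β G = 0
    have e1 : Polynomial.aeval β ((H.comp U).comp Gt) = 0 := by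
      rw [Polynomial.aeval_comp, hβ', St2.aeval_lin_zero hq1 (St2.isLin_comp p k hqeq hH hU)]
    have e2 : Polynomial.aeval β ((H.comp V).comp (Polynomial.X ^ q ^ (r * n) - Polynomial.X : Polynomial Fqm)) = 0 := by
      rw [Polynomial.aeval_comp, St2.aeval_W_eq_zero hcardK β,
        St2.aeval_lin_zero hq1 (St2.isLin_comp p k hqeq hH hV)]
    rw [hGbez, map_add, e1, e2, add_zero]
  -- (ii) → (iii)
  have h23 : ZSet K Gt = T →
      (SymDvdR q r G Gt ∧ SymDvdR q r G (Polynomial.X ^ q ^ (r * n) - Polynomial.X : Polynomial Fqm) ∧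
        ∀ E : Polynomial Fqm, IsLin q r E → SymDvdR q r E Gt →
          SymDvdR q r E (Polynomial.X ^ q ^ (r * n) - Polynomial.X : Polynomial Fqm) → SymDvdR q r E G) := by
    intro hZ
    rw [hT] at hZ
    have hdvdGt : SymDvdR q r G Gt := by
      obtain ⟨Q, R, hQ, hR, heq, hsz⟩ := St2.lin_div p k hqeq hq2 hr hGt hG.1 hG0
      have hR0 : R = 0 := by
        rcases hsz with h | h
        · exact h
        refine St2.lin_vanish_eq_zero (K := K) hq2 hr hn hcardK hG0 hGdvdW h ?_
        intro β hβ
        have hβGt : Polynomial.aeval β Gt = 0 := by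
          have hmem : β ∈ ZSet K Gt := by rw [hZ]; exact hβ
          exact hmem
        have hRe : R = Gt - Q.comp G := by rw [heq]; ring
        rw [hRe, map_sub, hβGt, Polynomial.aeval_comp, hβ,
          St2.aeval_lin_zero hq1 hQ, sub_zero]
      exact ⟨Q, hQ, by rw [heq, hR0, add_zero]⟩
    refine ⟨hdvdGt, hGW, ?_⟩
    rintro E hE ⟨A, hA, hAeq⟩ ⟨B, hB, hBeq⟩
    have hE0 : E ≠ 0 := by
      rintro rfl
      have hW0 : (Polynomial.X ^ q ^ (r * n) - Polynomial.X : Polynomial Fqm) = Polynomial.C (Polynomial.eval 0 B) := by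
        rw [hBeq, Polynomial.comp_zero]
      have hcoeff : Polynomial.eval 0 B = 0 := by
        rw [← Polynomial.coeff_zero_eq_eval_zero]
        exact St2.lin_coeff_zero hq1 hB
      rw [hcoeff, Polynomial.C_0] at hW0
      exact St2.W_ne_zero hq2 hr n hn hW0
    have hEdvdW : E ∣ (Polynomial.X ^ q ^ (r * n) - Polynomial.X : Polynomial Fqm) := hBeq ▸ St2.dvd_lin_comp hq1 hB E
    obtain ⟨Q, R, hQ, hR, heq, hsz⟩ := St2.lin_div p k hqeq hq2 hr hG.1 hE hE0
    have hR0 : R = 0 := by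
      rcases hsz with h | h
      · exact h
      refine St2.lin_vanish_eq_zero (K := K) hq2 hr hn hcardK hE0 hEdvdW h ?_
      intro β hβ
      have hβGt : Polynomial.aeval β Gt = 0 := St2.zset_mono hq1 ⟨A, hA, hAeq⟩ hβ
      have hβG : Polynomial.aeval β G = 0 := by
        have hmem : β ∈ ZSet K G := by rw [← hZ]; exact hβGt
        exact hmem
      have hRe : R = G - Q.comp E := by rw [heq]; ring
      rw [hRe, map_sub, hβG, Polynomial.aeval_comp, hβ,
        St2.aeval_lin_zero hq1 hQ, sub_zero]
    exact ⟨Q, hQ, by rw [heq, hR0, add_zero]⟩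
  exact ⟨⟨fun h => h32 (h13 h), fun h => h31 (h23 h)⟩, ⟨h13, h31⟩⟩
end

section
/- For any element β of an extension field of F_{q^{lcm(r,m)}}, there exists a unique monic q^r-polynomial F(x) over F_{q^m} of minimal q^r-degree such that F(β) = 0. Moreover, if L(x) is any q^r-polynomial over F_{q^m} with L(β) = 0, then F(x) divides L(x) both conventionally (as polynomials) and symbolically on the right. -/
open Polynomial

lemma isLin_sub {q r : ℕ} {F : Type*} [Field F] {P Q : Polynomial F}
    (hP : IsLin q r P) (hQ : IsLin q r Q) : IsLin q r (P - Q) := by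
  intro i hi
  rw [mem_support_iff, coeff_sub] at hi
  rcases eq_or_ne (P.coeff i) 0 with h | h
  · exact hQ i (mem_support_iff.mpr (by intro h'; simp [h, h'] at hi))
  · exact hP i (mem_support_iff.mpr h)

lemma isLin_add {q r : ℕ} {F : Type*} [Field F] {P Q : Polynomial F}
    (hP : IsLin q r P) (hQ : IsLin q r Q) : IsLin q r (P + Q) := by
  intro i hi
  rw [mem_support_iff, coeff_add] at hi
  rcases eq_or_ne (P.coeff i) 0 with h | h
  · exact hQ i (mem_support_iff.mpr (by intro h'; simp [h, h'] at hi))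
  · exact hP i (mem_support_iff.mpr h)

lemma isLin_C_mul {q r : ℕ} {F : Type*} [Field F] {P : Polynomial F} (c : F)
    (hP : IsLin q r P) : IsLin q r (Polynomial.C c * P) := by
  intro i hi
  rw [mem_support_iff, coeff_C_mul] at hi
  exact hP i (mem_support_iff.mpr (by intro h'; simp [h'] at hi))

lemma isLin_mul_C {q r : ℕ} {F : Type*} [Field F] {P : Polynomial F} (c : F)
    (hP : IsLin q r P) : IsLin q r (P * Polynomial.C c) := by
  rw [mul_comm]; exact isLin_C_mul c hP

lemma isLin_pow_frob {q r : ℕ} {F : Type*} [Field F] (p : ℕ) [Fact p.Prime] [CharP F p]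
    {s : ℕ} (hs : p ^ s = q) {P : Polynomial F} (h : IsLin q r P) (k : ℕ) :
    IsLin q r (P ^ q ^ (r * k)) := by
  intro i hi
  have hq : q ^ (r * k) = p ^ (s * (r * k)) := by rw [← hs, ← pow_mul]
  rw [hq, ← Polynomial.map_iterateFrobenius_expand p, mem_support_iff, Polynomial.coeff_map] at hi
  have h2 : (Polynomial.expand F (p ^ (s * (r * k))) P).coeff i ≠ 0 := by
    intro h0; rw [h0] at hi; exact hi (map_zero _)
  have hppos : 0 < p ^ (s * (r * k)) := pow_pos (Fact.out : p.Prime).pos _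
  rw [Polynomial.coeff_expand hppos] at h2
  split_ifs at h2 with hd
  · obtain ⟨c, rfl⟩ := hd
    rw [Nat.mul_div_cancel_left _ hppos] at h2
    obtain ⟨j, hj⟩ := h c (mem_support_iff.mpr h2)
    exact ⟨k + j, by rw [hj, ← hq, ← pow_add, ← Nat.mul_add]⟩
  · exact absurd rfl h2

lemma key {q r : ℕ} (hq2 : 2 ≤ q) (hr : 0 < r) {Fqm K : Type*} [Field Fqm] [Field K]
    [Algebra Fqm K] (p : ℕ) [Fact p.Prime] [CharP Fqm p] {s : ℕ} (hs : p ^ s = q)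
    (β : K) (F : Polynomial Fqm) (hF : IsMinQPoly q r β F) :
    ∀ L : Polynomial Fqm, IsLin q r L → Polynomial.aeval β L = 0 →
      F ∣ L ∧ SymDvdR q r F L := by
  obtain ⟨hFlin, hFmon, hFz, hFmin⟩ := hF
  suffices H : ∀ n, ∀ L : Polynomial Fqm, L.natDegree = n → IsLin q r L →
      Polynomial.aeval β L = 0 → F ∣ L ∧ SymDvdR q r F L by
    intro L hL hz; exact H _ L rfl hL hz
  intro n
  induction n using Nat.strong_induction_on with
  | _ n ih =>
  intro L hn hL hz
  subst hn
  rcases eq_or_ne L 0 with rfl | h0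
  · exact ⟨dvd_zero _, 0, fun i hi => absurd hi (by simp), by simp⟩
  have hFn0 : F ≠ 0 := hFmon.ne_zero
  obtain ⟨jL, hjL⟩ := hL L.natDegree (natDegree_mem_support_of_nonzero h0)
  obtain ⟨jF, hjF⟩ := hFlin F.natDegree (natDegree_mem_support_of_nonzero hFn0)
  have hc : L.leadingCoeff ≠ 0 := leadingCoeff_ne_zero.mpr h0
  -- minimality gives natDegree F ≤ natDegree L
  have hdle : F.natDegree ≤ L.natDegree := by
    have h1 := hFmin (L * Polynomial.C L.leadingCoeff⁻¹)
      (isLin_mul_C _ hL) (monic_mul_leadingCoeff_inv h0)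
      (by rw [map_mul, hz, zero_mul])
    rwa [natDegree_mul_C (inv_ne_zero hc)] at h1
  have hjle : jF ≤ jL := by
    rw [hjF, hjL] at hdle
    have := (Nat.pow_le_pow_iff_right hq2).mp hdle
    exact Nat.le_of_mul_le_mul_left this hr
  set k := jL - jF with hk
  set E := q ^ (r * k) with hE
  have hEpos : 0 < E := pow_pos (by omega) _
  set G := Polynomial.C L.leadingCoeff * F ^ E with hG
  have hFE0 : F ^ E ≠ 0 := pow_ne_zero _ hFn0
  have hG0 : G ≠ 0 := mul_ne_zero (by simpa using hc) hFE0
  have hdegG : G.natDegree = L.natDegree := by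
    rw [hG, natDegree_C_mul hc, natDegree_pow, hjF, hjL, hE, ← pow_add, ← Nat.mul_add]
    congr 2
    omega
  have hlcG : G.leadingCoeff = L.leadingCoeff := by
    rw [hG, leadingCoeff_mul, leadingCoeff_C, leadingCoeff_pow, hFmon.leadingCoeff,
      one_pow, mul_one]
  set L' := L - G with hL'
  have hlinG : IsLin q r G := isLin_C_mul _ (isLin_pow_frob p hs hFlin k)
  have hlin' : IsLin q r L' := isLin_sub hL hlinG
  have hz' : Polynomial.aeval β L' = 0 := by
    rw [hL', map_sub, hz, hG, map_mul, map_pow, hFz, zero_pow hEpos.ne', mul_zero, sub_zero]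
  have hdeglt : L'.natDegree < L.natDegree := by
    have hdlt : L'.degree < L.degree :=
      degree_sub_lt (by rw [degree_eq_natDegree h0, degree_eq_natDegree hG0, hdegG]) h0
        hlcG.symm
    rcases eq_or_ne L' 0 with h | h
    · rw [h, natDegree_zero]
      have : 0 < L.natDegree := by rw [hjL]; exact pow_pos (by omega) _
      omega
    · exact natDegree_lt_natDegree h hdlt
  obtain ⟨hdvd', Q', hQ'lin, hQ'⟩ := ih _ hdeglt L' rfl hlin' hz'
  have hLeq : L = L' + G := by rw [hL', sub_add_cancel]
  constructor
  · rw [hLeq]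
    exact dvd_add hdvd' (Dvd.dvd.mul_left (dvd_pow_self F hEpos.ne') _)
  · refine ⟨Q' + Polynomial.C L.leadingCoeff * Polynomial.X ^ E, ?_, ?_⟩
    · refine isLin_add hQ'lin (isLin_C_mul _ ?_)
      intro i hi
      have : i = E := by
        by_contra hne
        simp [Polynomial.coeff_X_pow, hne, mem_support_iff] at hi
      exact ⟨k, by rw [this, hE]⟩
    · rw [add_comp, mul_comp, C_comp, pow_comp, X_comp, ← hQ']
      conv_lhs => rw [hLeq, hG]
/-- For any `β` in an extension field of `F_{q^{lcm(r,m)}}`, there is a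
unique monic `q^r`-polynomial `F` over `F_{q^m}` of minimal degree with `F(β) = 0`;
moreover `F` divides every `q^r`-polynomial over `F_{q^m}` vanishing at `β`, both
conventionally and symbolically on the right. -/
theorem statement6
    (q m r t : ℕ) (hq : IsPrimePow q) (hm : 0 < m) (hr : 0 < r) (ht : 0 < t)
    (Fqm K : Type*) [Field Fqm] [Fintype Fqm] [Field K] [Fintype K] [Algebra Fqm K]
    (hcardm : Fintype.card Fqm = q ^ m)
    (hcardK : Fintype.card K = q ^ (Nat.lcm r m * t))
    (β : K) :
    (∃! F : Polynomial Fqm, IsMinQPoly q r β F) ∧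
    ∀ F : Polynomial Fqm, IsMinQPoly q r β F →
      ∀ L : Polynomial Fqm, IsLin q r L → Polynomial.aeval β L = 0 →
        F ∣ L ∧ SymDvdR q r F L := by
  have hq2 : 2 ≤ q := hq.two_le
  obtain ⟨p, s, hp, hs0, hpsq⟩ := hq
  have hpp : p.Prime := Nat.prime_iff.mpr hp
  haveI := Fact.mk hpp
  haveI : CharP Fqm (ringChar Fqm) := ringChar.charP Fqm
  obtain ⟨a, hprime', hcard'⟩ := FiniteField.card Fqm (ringChar Fqm)
  have hcards : (ringChar Fqm) ^ (a : ℕ) = p ^ (s * m) := by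
    rw [← hcard', hcardm, ← hpsq, ← pow_mul]
  have hpe : ringChar Fqm = p := by
    have hdvd : ringChar Fqm ∣ p ^ (s * m) :=
      hcards ▸ dvd_pow_self (ringChar Fqm) a.ne_zero
    exact (Nat.prime_dvd_prime_iff_eq hprime' hpp).mp (hprime'.dvd_of_dvd_pow hdvd)
  haveI : CharP Fqm p := hpe ▸ ringChar.charP Fqm
  -- the annihilator X^(q^N) - X
  set N := Nat.lcm r m * t with hN
  have hNpos : 0 < N :=
    Nat.mul_pos (Nat.pos_of_ne_zero (Nat.lcm_ne_zero hr.ne' hm.ne')) ht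
  have hqN2 : 2 ≤ q ^ N := le_trans hq2 (Nat.le_self_pow hNpos.ne' q)
  set P0 : Polynomial Fqm := Polynomial.X ^ q ^ N - Polynomial.X with hP0
  have hP0lin : IsLin q r P0 := by
    intro i hi
    rw [Polynomial.mem_support_iff, hP0, Polynomial.coeff_sub] at hi
    by_cases h1 : i = q ^ N
    · refine ⟨(Nat.lcm r m / r) * t, ?_⟩
      rw [h1, hN]
      congr 1
      rw [← Nat.mul_assoc, Nat.mul_div_cancel' (Nat.dvd_lcm_left r m)]
    · by_cases h2 : i = 1
      · exact ⟨0, by rw [h2, Nat.mul_zero, pow_zero]⟩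
      · simp [Polynomial.coeff_X_pow, Polynomial.coeff_X, h1, h2, Ne.symm h2] at hi
  have hP0mon : P0.Monic := by
    refine Polynomial.monic_X_pow_sub ?_
    rw [Polynomial.degree_X]
    exact_mod_cast (by omega : 1 < q ^ N)
  have hP0z : Polynomial.aeval β P0 = 0 := by
    rw [hP0, map_sub, map_pow, Polynomial.aeval_X, ← hcardK, FiniteField.pow_card, sub_self]
  -- minimal monic linearized annihilator
  set S := {n | ∃ P : Polynomial Fqm,
    IsLin q r P ∧ P.Monic ∧ Polynomial.aeval β P = 0 ∧ P.natDegree = n} with hS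
  have hSne : S.Nonempty := ⟨P0.natDegree, P0, hP0lin, hP0mon, hP0z, rfl⟩
  obtain ⟨Fm, hFmlin, hFmmon, hFmz, hFmdeg⟩ := Nat.sInf_mem hSne
  have hFmin : IsMinQPoly q r β Fm :=
    ⟨hFmlin, hFmmon, hFmz, fun Q hQl hQm hQz => by
      rw [hFmdeg]; exact Nat.sInf_le ⟨Q, hQl, hQm, hQz, rfl⟩⟩
  refine ⟨⟨Fm, hFmin, ?_⟩, ?_⟩
  · intro F' hF'
    have h1 := (key hq2 hr p hpsq β Fm hFmin F' hF'.1 hF'.2.2.1).1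
    have h2 := (key hq2 hr p hpsq β F' hF' Fm hFmlin hFmz).1
    exact Polynomial.eq_of_monic_of_associated hF'.2.1 hFmmon (associated_of_dvd_dvd h2 h1)
  · intro Fx hFx L hL hz
    exact key hq2 hr p hpsq β Fx hFx L hL hz
end

section
/- Let r = 1 and n = s·m for a positive integer s, and let α, α^q, α^{q^2}, ..., α^{q^{n−1}} be a normal basis of F_{q^n} over F_q. Then for every integer b ≥ 0, the q-cyclotomic space of α^{q^b} over F_{q^m} is C_q(α^{q^b}) = span_{F_q}{ α^{q^b}, α^{q^{b+m}}, α^{q^{b+2m}}, ..., α^{q^{b+(s−1)m}} }. -/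
section Aux

open Polynomial

variable {Fq Fqm K : Type*} [Field Fq] [Fintype Fq] [Field Fqm] [Fintype Fqm]
  [Field K] [Algebra Fq K] [Algebra Fqm K]

lemma aeval_isLin_add (p k q : ℕ) [Fact p.Prime] [CharP K p] (hpk : p ^ k = q)
    (F : Polynomial Fqm) (hF : IsLin q 1 F) (x y : K) :
    aeval (x + y) F = aeval x F + aeval y F := by
  classical
  simp only [aeval_def, eval₂_eq_sum, Polynomial.sum_def]
  rw [← Finset.sum_add_distrib]
  refine Finset.sum_congr rfl fun i hi => ?_
  obtain ⟨j, hj⟩ := hF i hi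
  rw [hj, one_mul, ← hpk, ← pow_mul, add_pow_char_pow, mul_add]

lemma aeval_isLin_mul (q : ℕ) (hcardq : Fintype.card Fq = q)
    (F : Polynomial Fqm) (hF : IsLin q 1 F) (c : Fq) (x : K) :
    aeval (algebraMap Fq K c * x) F = algebraMap Fq K c * aeval x F := by
  classical
  simp only [aeval_def, eval₂_eq_sum, Polynomial.sum_def]
  rw [Finset.mul_sum]
  refine Finset.sum_congr rfl fun i hi => ?_
  obtain ⟨j, hj⟩ := hF i hi
  rw [hj, one_mul, mul_pow, ← map_pow, ← hcardq, FiniteField.pow_card_pow]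
  ring

lemma aeval_isLin_pow (p k q mm : ℕ) [Fact p.Prime] [CharP K p] (hpk : p ^ k = q)
    (hcardm : Fintype.card Fqm = q ^ mm)
    (F : Polynomial Fqm) (hF : IsLin q 1 F) (x : K) :
    aeval (x ^ q ^ mm) F = (aeval x F) ^ q ^ mm := by
  classical
  have hphi : ∀ z : K, z ^ q ^ mm = iterateFrobenius K p (k * mm) z := by
    intro z
    rw [iterateFrobenius_def, ← hpk, ← pow_mul]
  conv_rhs => rw [hphi]
  simp only [aeval_def, eval₂_eq_sum, Polynomial.sum_def]
  rw [map_sum]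
  refine Finset.sum_congr rfl fun i hi => ?_
  obtain ⟨j, hj⟩ := hF i hi
  rw [hj, one_mul, map_mul, map_pow]
  congr 1
  · rw [← hphi, ← map_pow, ← hcardm, FiniteField.pow_card]
  · rw [← hphi]

end Aux

/-- Let `r = 1`, `n = s·m`, and let `α, α^q, …, α^{q^{n-1}}` be a normal
basis of `F_{q^n}` over `F_q`. Then for every `b ≥ 0`, the `q`-cyclotomic space of
`α^{q^b}` over `F_{q^m}` (the root space of its minimal `q`-polynomial over `F_{q^m}`) is
the `F_q`-span of `α^{q^b}, α^{q^{b+m}}, …, α^{q^{b+(s-1)m}}`. -/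
theorem statement7
    (q m s : ℕ) (hq : IsPrimePow q) (hm : 0 < m) (hs : 0 < s)
    (n : ℕ) (hn : n = s * m)
    (Fq Fqm K : Type*) [Field Fq] [Fintype Fq] [Field Fqm] [Fintype Fqm]
    [Field K] [Fintype K] [Algebra Fq K] [Algebra Fqm K]
    (hcardq : Fintype.card Fq = q) (hcardm : Fintype.card Fqm = q ^ m)
    (hcardK : Fintype.card K = q ^ n)
    (α : K) (bas : Module.Basis (Fin n) Fq K) (hbas : ∀ i : Fin n, bas i = α ^ q ^ (i : ℕ)) :
    ∀ b : ℕ, ∀ F : Polynomial Fqm, IsMinQPoly q 1 (α ^ q ^ b) F →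
      ZSet K F =
        ↑(Submodule.span Fq (Set.range fun j : Fin s => α ^ q ^ (b + (j : ℕ) * m))) := by
  classical
  intro b F hF
  obtain ⟨hlin, hmonic, hroot, hmin⟩ := hF
  obtain ⟨p, k, hp, hk, hpk⟩ := hq
  haveI : Fact p.Prime := ⟨hp.nat_prime⟩
  have hq2 : 2 ≤ q := by
    calc 2 ≤ p := hp.nat_prime.two_le
    _ ≤ p ^ k := Nat.le_self_pow hk.ne' p
    _ = q := hpk
  have hn0 : 0 < n := by rw [hn]; exact Nat.mul_pos hs hm
  -- characteristic of K
  have hpK : (p : K) = 0 := by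
    have h1 : ((Fintype.card K : ℕ) : K) = 0 := FiniteField.cast_card_eq_zero K
    rw [hcardK, ← hpk, ← pow_mul] at h1
    push_cast at h1
    exact pow_eq_zero_iff (by positivity : 0 < k * n).ne' |>.mp h1
  haveI hchar : CharP K p := by
    have hdvd : ringChar K ∣ p := ringChar.dvd hpK
    rcases (hp.nat_prime.eq_one_or_self_of_dvd _ hdvd) with h1 | h1
    · exfalso
      have := CharP.cast_eq_zero K (ringChar K)
      rw [h1] at this
      simpa using this
    · exact ringChar.of_eq h1
  set β := α ^ q ^ b with hβ
  clear_value β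
  have hKpow : ∀ x : K, x ^ q ^ n = x := fun x => by
    rw [← hcardK]; exact FiniteField.pow_card x
  -- periodicity of α ^ q ^ t
  have hper : ∀ c a : ℕ, α ^ q ^ (c + n * a) = α ^ q ^ c := by
    intro c a
    induction a with
    | zero => simp
    | succ a ih =>
      have h2 : c + n * (a + 1) = (c + n * a) + n := by ring
      rw [h2, pow_add, pow_mul, hKpow]
      exact ih
  have hmodp : ∀ t : ℕ, α ^ q ^ t = α ^ q ^ (t % n) := by
    intro t
    conv_lhs => rw [← Nat.mod_add_div t n]
    exact hper (t % n) (t / n)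
  set u : Fin s → K := fun j : Fin s => α ^ q ^ (b + (j : ℕ) * m) with hu
  set T : Submodule Fq K := Submodule.span Fq (Set.range u) with hT
  -- injectivity of indices
  have hfinj : ∀ j1 j2 : Fin s, (b + (j1 : ℕ) * m) % n = (b + (j2 : ℕ) * m) % n → j1 = j2 := by
    intro j1 j2 h
    have h1 : ((n : ℤ)) ∣ ((b + (j2 : ℕ) * m : ℕ) : ℤ) - ((b + (j1 : ℕ) * m : ℕ) : ℤ) :=
      Nat.ModEq.dvd h
    have h2 : ((s : ℤ) * m) ∣ (((j2 : ℕ) : ℤ) - ((j1 : ℕ) : ℤ)) * (m : ℤ) := by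
      rw [hn] at h1
      push_cast at h1
      obtain ⟨e, he⟩ := h1
      exact ⟨e, by push_cast; linarith [he]⟩
    have hm' : (m : ℤ) ≠ 0 := by exact_mod_cast hm.ne'
    obtain ⟨e, he⟩ := h2
    have h3 : ((j2 : ℕ) : ℤ) - ((j1 : ℕ) : ℤ) = (s : ℤ) * e := by
      apply mul_right_cancel₀ hm'
      rw [he]; ring
    have hb1 : (((j1 : ℕ) : ℤ)) < s := by exact_mod_cast j1.2
    have hb2 : (((j2 : ℕ) : ℤ)) < s := by exact_mod_cast j2.2
    have hg1 : (0 : ℤ) ≤ ((j1 : ℕ) : ℤ) := by positivity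
    have hg2 : (0 : ℤ) ≤ ((j2 : ℕ) : ℤ) := by positivity
    have hs' : (0 : ℤ) < s := by exact_mod_cast hs
    have he0 : e = 0 := by
      by_contra h0
      rcases lt_or_gt_of_ne h0 with hlt | hgt
      · have : (s : ℤ) * e ≤ s * (-1) := by
          apply mul_le_mul_of_nonneg_left (by omega) hs'.le
        linarith
      · have : (s : ℤ) * 1 ≤ s * e := by
          apply mul_le_mul_of_nonneg_left (by omega) hs'.le
        linarith
    rw [he0, mul_zero, sub_eq_zero] at h3
    exact (Fin.ext (by exact_mod_cast h3.symm))
  have hinjf : Function.Injective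
      (fun j : Fin s => (⟨(b + (j : ℕ) * m) % n, Nat.mod_lt _ hn0⟩ : Fin n)) := by
    intro j1 j2 h
    exact hfinj j1 j2 (by simpa using congrArg Fin.val h)
  have hub : ∀ j : Fin s, u j = bas ⟨(b + (j : ℕ) * m) % n, Nat.mod_lt _ hn0⟩ := by
    intro j
    rw [hbas]
    exact hmodp _
  have hli : LinearIndependent Fq u := by
    have heq : u = bas ∘ (fun j : Fin s => (⟨(b + (j : ℕ) * m) % n, Nat.mod_lt _ hn0⟩ : Fin n)) :=
      funext hub
    rw [heq]
    exact bas.linearIndependent.comp _ hinjf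
  -- cardinality of T
  have hfr : Module.finrank Fq ↥T = s := by
    rw [hT, finrank_span_eq_card hli, Fintype.card_fin]
  letI : Fintype ↥T := Fintype.ofFinite ↥T
  have hcardT : Fintype.card ↥T = q ^ s := by
    rw [Module.card_eq_pow_finrank (K := Fq) (V := ↥T), hcardq, hfr]
  have hncardT : (T : Set K).ncard = q ^ s := by
    rw [← hcardT, ← Nat.card_eq_fintype_card, ← Nat.card_coe_set_eq]
    rfl
  -- F vanishes on T
  have hβj : ∀ t : ℕ, Polynomial.aeval (β ^ q ^ (t * m)) F = 0 := by
    intro t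
    induction t with
    | zero => simpa using hroot
    | succ t ih =>
      have h2 : β ^ q ^ ((t + 1) * m) = (β ^ q ^ (t * m)) ^ q ^ m := by
        rw [← pow_mul, ← pow_add, add_mul, one_mul]
      rw [h2, aeval_isLin_pow p k q m hpk hcardm F hlin, ih, zero_pow]
      exact (pow_pos (by omega : 0 < q) m).ne'
  have hzero : ∀ z ∈ T, Polynomial.aeval z F = 0 := by
    intro z hz
    induction hz using Submodule.span_induction with
    | mem x hx =>
      obtain ⟨j, rfl⟩ := hx
      have hx2 : u j = β ^ q ^ ((j : ℕ) * m) := by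
        show α ^ q ^ (b + (j : ℕ) * m) = β ^ q ^ ((j : ℕ) * m)
        rw [hβ, ← pow_mul, ← pow_add]
      rw [hx2]
      exact hβj _
    | zero =>
      have h0 := aeval_isLin_add p k q hpk F hlin (0 : K) 0
      rw [add_zero] at h0
      exact left_eq_add.mp h0
    | add x y hx hy ihx ihy =>
      rw [aeval_isLin_add p k q hpk F hlin x y, ihx, ihy, add_zero]
    | smul a x hx ih =>
      rw [Algebra.smul_def, aeval_isLin_mul q hcardq F hlin a x, ih, mul_zero]
  -- competitor polynomial of degree ≤ q ^ s
  have hEnoninj : ¬ Function.Injective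
      (fun v : Fin (s + 1) → Fqm => ∑ i : Fin (s + 1), algebraMap Fqm K (v i) * β ^ q ^ (i : ℕ)) := by
    intro hinj
    have hle := Fintype.card_le_of_injective _ hinj
    rw [Fintype.card_fun, Fintype.card_fin, hcardm, hcardK, ← pow_mul] at hle
    have hlt : q ^ n < q ^ (m * (s + 1)) := by
      apply Nat.pow_lt_pow_right (by omega)
      rw [hn]
      nlinarith [hm, hs]
    exact absurd (lt_of_lt_of_le hlt hle) (lt_irrefl _)
  rw [Function.not_injective_iff] at hEnoninj
  obtain ⟨v, w, hvw, hne⟩ := hEnoninj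
  set d : Fin (s + 1) → Fqm := v - w with hd
  have hdne : d ≠ 0 := sub_ne_zero.mpr hne
  have hdsum : ∑ i : Fin (s + 1), algebraMap Fqm K (d i) * β ^ q ^ (i : ℕ) = 0 := by
    have hsplit : ∀ i : Fin (s + 1), algebraMap Fqm K (d i) * β ^ q ^ (i : ℕ)
        = algebraMap Fqm K (v i) * β ^ q ^ (i : ℕ) - algebraMap Fqm K (w i) * β ^ q ^ (i : ℕ) := by
      intro i
      rw [hd]
      simp [sub_mul]
    rw [Finset.sum_congr rfl (fun i _ => hsplit i), Finset.sum_sub_distrib, hvw, sub_self]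
  have hdex : ∃ i, d i ≠ 0 := by
    by_contra h
    push_neg at h
    exact hdne (funext h)
  set S : Finset (Fin (s + 1)) := Finset.univ.filter fun i => d i ≠ 0 with hS
  have hSne : S.Nonempty := ⟨hdex.choose, by simp [hS, hdex.choose_spec]⟩
  set i0 : Fin (s + 1) := S.max' hSne with hi0
  have hdi0 : d i0 ≠ 0 := by
    have := S.max'_mem hSne
    simpa [hS] using this
  have hdgt : ∀ i : Fin (s + 1), i0 < i → d i = 0 := by
    intro i hi
    by_contra h
    exact absurd (S.le_max' i (by simp [hS, h])) (not_le.mpr hi)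
  set c : Fqm := (d i0)⁻¹ with hc
  set P : Polynomial Fqm :=
    ∑ i : Fin (s + 1), Polynomial.C (c * d i) * Polynomial.X ^ q ^ (i : ℕ) with hP
  have hPcoeff : ∀ t : ℕ,
      P.coeff t = ∑ i : Fin (s + 1), if t = q ^ (i : ℕ) then c * d i else 0 := by
    intro t
    rw [hP, Polynomial.finset_sum_coeff]
    refine Finset.sum_congr rfl fun i _ => ?_
    rw [Polynomial.coeff_C_mul_X_pow]
  have hqinj : ∀ i1 i2 : ℕ, q ^ i1 = q ^ i2 → i1 = i2 :=
    fun i1 i2 h => Nat.pow_right_injective hq2 h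
  have hPcoeffq : ∀ i : Fin (s + 1), P.coeff (q ^ (i : ℕ)) = c * d i := by
    intro i
    rw [hPcoeff]
    rw [Finset.sum_eq_single i]
    · simp
    · intro i2 _ hne2
      rw [if_neg]
      intro h
      exact hne2 (Fin.ext (hqinj _ _ h)).symm
    · intro h
      exact absurd (Finset.mem_univ i) h
  have hPdegle : P.natDegree ≤ q ^ (i0 : ℕ) := by
    rw [Polynomial.natDegree_le_iff_coeff_eq_zero]
    intro t ht
    rw [hPcoeff]
    refine Finset.sum_eq_zero fun i _ => ?_
    by_cases hti : t = q ^ (i : ℕ)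
    · rw [if_pos hti]
      have h1 : (i0 : ℕ) < (i : ℕ) := by
        by_contra hle2
        push_neg at hle2
        have hle3 : q ^ (i : ℕ) ≤ q ^ (i0 : ℕ) := Nat.pow_le_pow_right (by omega) hle2
        omega
      have hd0 : d i = 0 := hdgt i (Fin.lt_def.mpr h1)
      rw [hd0, mul_zero]
    · rw [if_neg hti]
  have hPdeg : P.natDegree = q ^ (i0 : ℕ) := by
    apply Polynomial.natDegree_eq_of_le_of_coeff_ne_zero hPdegle
    rw [hPcoeffq]
    exact mul_ne_zero (inv_ne_zero hdi0) hdi0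
  have hPmonic : P.Monic := by
    show P.leadingCoeff = 1
    rw [Polynomial.leadingCoeff, hPdeg, hPcoeffq, hc]
    exact inv_mul_cancel₀ hdi0
  have hPlin : IsLin q 1 P := by
    intro t ht
    rw [Polynomial.mem_support_iff] at ht
    by_contra hnone
    push_neg at hnone
    apply ht
    rw [hPcoeff]
    refine Finset.sum_eq_zero fun i _ => ?_
    rw [if_neg]
    exact fun h => hnone (i : ℕ) (by rw [h, one_mul])
  have hPaeval : Polynomial.aeval β P = 0 := by
    rw [hP, map_sum]
    have hterm : ∀ i : Fin (s + 1),
        Polynomial.aeval β (Polynomial.C (c * d i) * Polynomial.X ^ q ^ (i : ℕ))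
        = algebraMap Fqm K c * (algebraMap Fqm K (d i) * β ^ q ^ (i : ℕ)) := by
      intro i
      simp [mul_assoc]
    rw [Finset.sum_congr rfl fun i _ => hterm i, ← Finset.mul_sum, hdsum, mul_zero]
  have hile : (i0 : ℕ) ≤ s := Nat.lt_succ_iff.mp i0.2
  have hFdeg : F.natDegree ≤ q ^ s := by
    refine le_trans (hmin P hPlin hPmonic hPaeval) ?_
    rw [hPdeg]
    exact Nat.pow_le_pow_right (by omega) hile
  -- cardinality bound on the root set
  have hZsub : ZSet K F ⊆ ((F.map (algebraMap Fqm K)).roots.toFinset : Set K) := by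
    intro z hz
    have hz' : Polynomial.aeval z F = 0 := hz
    rw [Finset.mem_coe, Multiset.mem_toFinset, Polynomial.mem_roots']
    refine ⟨(hmonic.map (algebraMap Fqm K)).ne_zero, ?_⟩
    rwa [Polynomial.IsRoot, Polynomial.eval_map, ← Polynomial.aeval_def]
  have hZcard : (ZSet K F).ncard ≤ q ^ s := by
    calc (ZSet K F).ncard ≤ (((F.map (algebraMap Fqm K)).roots.toFinset : Finset K) : Set K).ncard :=
          Set.ncard_le_ncard hZsub (Set.toFinite _)
    _ = (F.map (algebraMap Fqm K)).roots.toFinset.card := Set.ncard_coe_finset _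
    _ ≤ Multiset.card (F.map (algebraMap Fqm K)).roots := Multiset.toFinset_card_le _
    _ ≤ (F.map (algebraMap Fqm K)).natDegree := Polynomial.card_roots' _
    _ = F.natDegree := hmonic.natDegree_map _
    _ ≤ q ^ s := hFdeg
  have hsub : (T : Set K) ⊆ ZSet K F := fun z hz => hzero z hz
  exact (Set.eq_of_subset_of_ncard_le hsub (by rw [hncardT]; exact hZcard) (Set.toFinite _)).symm
end
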